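/- arXiv:1104.4724 — 7 statements merged into one kernel-verified Lean document; each statement's English description precedes it below -/
import Mathlib

section
/- Let X be a reflexive Banach space with a bimonotone basis satisfying a lower f-estimate with f(n) = log₂(n+1). For every n ∈ ℕ and ε > 0 there exists N(n,ε) (one may take N = n^k where k is minimal with (1+ε)^k > f(n^k)) such that for every normalized block sequence (y_k*) of X* of length N(n,ε), there exist successive subsets F₁ < ⋯ < Fₙ of [1, N(n,ε)] and λ > 0 such that, setting xᵢ* = λ ∑_{k ∈ Fᵢ} y_k*, the vector x* = ∑_{i=1}^n xᵢ* is an ℓ∞₊ⁿ-average with constant 1+ε. -/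
open scoped BigOperators Classical

noncomputable section

section Prelude

variable {X : Type*} [NormedAddCommGroup X] [NormedSpace ℝ X]

/-- The vector with finitely supported coefficients `c` with respect to the sequence `e`. -/
def vecOf (e : ℕ → X) (c : ℕ →₀ ℝ) : X := c.sum fun n a => a • e n

/-- `c < d` : the supports of `c` and `d` are successive. -/
def FsuppLt (c d : ℕ →₀ ℝ) : Prop := ∀ a ∈ c.support, ∀ b ∈ d.support, a < b

/-- The Gowers–Maurey function `f(n) = log₂(n+1)`. -/
def flog (n : ℕ) : ℝ := Real.logb 2 ((n : ℝ) + 1)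

/-- Support of a functional with respect to the basis `e` (via biorthogonal functionals). -/
def fsupp (e : ℕ → X) (f : X →L[ℝ] ℝ) : Set ℕ := {n | f (e n) ≠ 0}

/-- Bimonotonicity of the basis `e`, expressed on finitely supported vectors:
projections onto intervals are contractive. -/
def Bimonotone (e : ℕ → X) : Prop :=
  ∀ (c : ℕ →₀ ℝ) (a b : ℕ), ‖vecOf e (c.filter fun n => n ∈ Finset.Icc a b)‖ ≤ ‖vecOf e c‖

/-- Lower `f`-estimate for a general function `f`. -/
def LowerEst (e : ℕ → X) (f : ℝ → ℝ) : Prop :=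
  ∀ (n : ℕ) (c : Fin n → ℕ →₀ ℝ), (∀ i j : Fin n, i < j → FsuppLt (c i) (c j)) →
    (1 / f (n : ℝ)) * ∑ i, ‖vecOf e (c i)‖ ≤ ‖∑ i, vecOf e (c i)‖

/-- Lower `f`-estimate with `f(n) = log₂(n+1)`. -/
def LowerFEst (e : ℕ → X) : Prop :=
  ∀ (n : ℕ) (c : Fin n → ℕ →₀ ℝ), (∀ i j : Fin n, i < j → FsuppLt (c i) (c j)) →
    (1 / flog n) * ∑ i, ‖vecOf e (c i)‖ ≤ ‖∑ i, vecOf e (c i)‖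

/-- `Y` embeds isomorphically into `Z` (linear isomorphism onto its image). -/
def Embeds (Y Z : Type*) [NormedAddCommGroup Y] [NormedSpace ℝ Y]
    [NormedAddCommGroup Z] [NormedSpace ℝ Z] : Prop :=
  ∃ T : Y →L[ℝ] Z, ∃ c : ℝ, 0 < c ∧ ∀ y, c * ‖y‖ ≤ ‖T y‖

/-- `Y` embeds into `Z` with constant `K` (i.e. `‖T‖ ⬝ ‖T⁻¹‖ ≤ K` after normalisation). -/
def EmbedsWithConst (K : ℝ) (Y Z : Type*) [NormedAddCommGroup Y] [NormedSpace ℝ Y]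
    [NormedAddCommGroup Z] [NormedSpace ℝ Z] : Prop :=
  ∃ T : Y →L[ℝ] Z, ∀ y, ‖y‖ ≤ ‖T y‖ ∧ ‖T y‖ ≤ K * ‖y‖

/-- The closed span `[eₙ : n ∉ S]`. -/
def spanCompl (e : ℕ → X) (S : Set ℕ) : Submodule ℝ X :=
  (Submodule.span ℝ (e '' Sᶜ)).topologicalClosure

/-- `Y` is tight in the basic sequence `e`. -/
def TightIn (e : ℕ → X) (Y : Type*) [NormedAddCommGroup Y] [NormedSpace ℝ Y] : Prop :=
  ∃ I : ℕ → Finset ℕ, (∀ i j : ℕ, i < j → ∀ a ∈ I i, ∀ b ∈ I j, a < b) ∧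
    ∀ A : Set ℕ, A.Infinite → ¬ Embeds Y ↥(spanCompl e (⋃ i ∈ A, (I i : Set ℕ)))

/-- The basis `e` is tight: every infinite-dimensional Banach space is tight in it. -/
def TightBasis (e : ℕ → X) : Prop :=
  ∀ (Y : Type) [NormedAddCommGroup Y] [NormedSpace ℝ Y] [CompleteSpace Y],
    ¬ FiniteDimensional ℝ Y → TightIn e Y

end Prelude

/-- `g` is an `ℓ∞₊ⁿ`-average with constant `C` in the dual: a normalized sum of `n`
successive finitely supported functionals each of norm at least `1/C`. -/
def IsLinftyAvgDual {X : Type} [NormedAddCommGroup X] [NormedSpace ℝ X]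
    (e : ℕ → X) (n : ℕ) (C : ℝ) (g : Fin n → X →L[ℝ] ℝ) : Prop :=
  ‖∑ i, g i‖ = 1 ∧ (∀ i, (fsupp e (g i)).Finite) ∧
  (∀ i j : Fin n, i < j → ∀ a ∈ fsupp e (g i), ∀ b ∈ fsupp e (g j), a < b) ∧
  ∀ i, 1 / C ≤ ‖g i‖

/-! Dualising bimonotonicity and the lower `f`-estimate, `N` successive functionals of norm at
most one sum to a functional of norm at most `f(N)`. Cut a normalized block sequence of length
`n ^ k` into `n` consecutive blocks of equal length. Either the norm of the total sum is at most
`1 + ε` times the norm of every block sum, and the normalized block sums form the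
`ℓ∞₊ⁿ`-average, or some block sum is smaller than the total by a factor `1 + ε`, and we recurse
into that block. If the recursion reaches single functionals, the total has norm at least
`(1 + ε) ^ k`, which exceeds `f(n ^ k)` for a suitable `k`. -/

open Finset

theorem sum_Ico_eq_sum_blocks {M : Type*} [AddCommMonoid M] (f : ℕ → M) (a m n : ℕ) :
    ∑ t ∈ Ico a (a + n * m), f t = ∑ i ∈ range n, ∑ t ∈ Ico (a + i * m) (a + (i + 1) * m), f t := by
  induction n with
  | zero => simp
  | succ n ih =>
    rw [sum_range_succ, ← ih, sum_Ico_consecutive _ (Nat.le_add_right a _)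
      (by rw [add_one_mul]; omega)]

theorem exists_balanced_blocks_or_pow_le (s : ℕ → ℕ → ℝ) {n N : ℕ} (hn : 0 < n) {C : ℝ}
    (hC : 0 ≤ C) (hone : ∀ t < N, 1 ≤ s t (t + 1)) (k a : ℕ) (hka : a + n ^ k ≤ N) :
    (∃ b m, 0 < m ∧ a ≤ b ∧ b + n * m ≤ a + n ^ k ∧
        ∀ i : Fin n, s b (b + n * m) ≤ C * s (b + i * m) (b + (i + 1) * m)) ∨
      C ^ k ≤ s a (a + n ^ k) := by
  induction k generalizing a with
  | zero => exact Or.inr (by simpa using hone a (by simpa using hka))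
  | succ k ih =>
    have hm : 0 < n ^ k := pow_pos hn k
    rw [pow_succ'] at hka ⊢
    by_cases hbal : ∀ i : Fin n,
        s a (a + n * n ^ k) ≤ C * s (a + i * n ^ k) (a + (i + 1) * n ^ k)
    · exact Or.inl ⟨a, n ^ k, hm, le_rfl, le_rfl, hbal⟩
    push Not at hbal
    obtain ⟨i, hi⟩ := hbal
    have hin : ((i : ℕ) + 1) * n ^ k ≤ n * n ^ k := Nat.mul_le_mul_right _ i.2
    rw [add_one_mul] at hi hin
    rcases ih (a + i * n ^ k) (by omega) with ⟨b, m, hm, hab, hbm, hbal⟩ | hgrow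
    · exact Or.inl ⟨b, m, hm, by omega, by omega, hbal⟩
    · refine Or.inr (le_of_lt ?_)
      calc C ^ (k + 1) = C * C ^ k := pow_succ' C k
        _ ≤ C * s (a + i * n ^ k) (a + i * n ^ k + n ^ k) := mul_le_mul_of_nonneg_left hgrow hC
        _ < s a (a + n * n ^ k) := by rwa [add_assoc]

theorem exists_monotone_cuts {S : ℕ → Set ℕ} (hfin : ∀ t, (S t).Finite)
    (hlt : ∀ i j, i < j → ∀ a ∈ S i, ∀ b ∈ S j, a < b) :
    ∃ p : ℕ → ℕ, Monotone p ∧ ∀ t, ∀ m ∈ S t, p t ≤ m ∧ m < p (t + 1) := by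
  refine ⟨fun t => ((range t).biUnion fun s => (hfin s).toFinset).sup (· + 1),
    fun s t hst => sup_mono (biUnion_subset_biUnion_of_subset_left _ (range_mono hst)),
    fun t m hm => ⟨Finset.sup_le fun m' hm' => ?_, ?_⟩⟩
  · obtain ⟨s, hs, hm's⟩ := mem_biUnion.1 hm'
    exact hlt s t (mem_range.1 hs) m' ((hfin s).mem_toFinset.1 hm's) m hm
  · exact Nat.lt_of_succ_le (le_sup (f := (· + 1))
      (mem_biUnion.2 ⟨t, self_mem_range_succ t, (hfin t).mem_toFinset.2 hm⟩))

theorem Finsupp.sum_filter_Ico_eq {M : Type*} [AddCommMonoid M] {p : ℕ → ℕ} (hp : Monotone p)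
    (c : ℕ →₀ M) (N : ℕ) :
    ∑ t ∈ range N, c.filter (· ∈ Ico (p t) (p (t + 1))) = c.filter (· ∈ Ico (p 0) (p N)) := by
  induction N with
  | zero => ext m; simp
  | succ N ih =>
    have h0 : p 0 ≤ p N := hp (Nat.zero_le N)
    have h1 : p N ≤ p (N + 1) := hp (Nat.le_succ N)
    rw [sum_range_succ, ih]
    ext m
    simp only [Finsupp.add_apply, Finsupp.filter_apply, mem_Ico]
    split_ifs <;> first | omega | simp

theorem sum_preimage_val_eq_sum_extend {M : Type*} [AddCommMonoid M] {N : ℕ} (y : Fin N → M)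
    (s : Finset ℕ) :
    ∑ k ∈ s.preimage Fin.val Fin.val_injective.injOn, y k =
      ∑ t ∈ s, Function.extend Fin.val y 0 t := by
  simp_rw [← Fin.val_injective.extend_apply y 0]
  exact sum_preimage _ _ _ _ fun t _ ht => Function.extend_apply' _ _ _ ht

theorem exists_one_add_mul_lt_pow {r : ℝ} (hr : 1 < r) (A : ℝ) : ∃ k : ℕ, 1 + k * A < r ^ k := by
  obtain ⟨k, hk, hk1⟩ := (((isLittleO_coe_const_pow_of_one_lt (R := ℝ) hr).bound
    (inv_pos.2 (by positivity : 0 < |A| + 2))).and (Filter.eventually_ge_atTop 1)).exists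
  rw [Real.norm_natCast, norm_pow, Real.norm_of_nonneg (by linarith),
    le_inv_mul_iff₀ (by positivity)] at hk
  have hk1' : (1 : ℝ) ≤ k := by exact_mod_cast hk1
  exact ⟨k, by nlinarith [le_abs_self A]⟩

theorem flog_pow_le {n : ℕ} (hn : 0 < n) (k : ℕ) : flog (n ^ k) ≤ 1 + k * Real.logb 2 n := by
  have hnk : (1 : ℝ) ≤ (n : ℝ) ^ k := one_le_pow₀ (by exact_mod_cast hn)
  calc flog (n ^ k) = Real.logb 2 ((n : ℝ) ^ k + 1) := by simp [flog]
    _ ≤ Real.logb 2 (2 * (n : ℝ) ^ k) :=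
        Real.logb_le_logb_of_le one_lt_two (by positivity) (by linarith)
    _ = 1 + k * Real.logb 2 n := by
        rw [Real.logb_mul two_ne_zero (by positivity), Real.logb_self_eq_one one_lt_two,
          Real.logb_pow]

theorem exists_flog_pow_lt {n : ℕ} (hn : 0 < n) {ε : ℝ} (hε : 0 < ε) :
    ∃ k, flog (n ^ k) < (1 + ε) ^ k :=
  (exists_one_add_mul_lt_pow (by linarith) (Real.logb 2 n)).imp fun k hk =>
    (flog_pow_le hn k).trans_lt hk

section Dual

variable {X : Type*} [NormedAddCommGroup X] [NormedSpace ℝ X] {e : ℕ → X}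

def FsuppBefore (e : ℕ → X) (g h : X →L[ℝ] ℝ) : Prop :=
  ∀ a ∈ fsupp e g, ∀ b ∈ fsupp e h, a < b

def IsDualBlockSeq (e : ℕ → X) (y : ℕ → X →L[ℝ] ℝ) : Prop :=
  (∀ t, (fsupp e (y t)).Finite) ∧ ∀ i j, i < j → FsuppBefore e (y i) (y j)

theorem vecOf_eq_linearCombination : vecOf e = Finsupp.linearCombination ℝ e :=
  funext fun c => (Finsupp.linearCombination_apply ℝ c).symm

theorem vecOf_sum {ι : Type*} (s : Finset ι) (c : ι → ℕ →₀ ℝ) :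
    vecOf e (∑ i ∈ s, c i) = ∑ i ∈ s, vecOf e (c i) := by
  rw [vecOf_eq_linearCombination]
  exact map_sum _ _ _

theorem apply_vecOf (g : X →L[ℝ] ℝ) (c : ℕ →₀ ℝ) :
    g (vecOf e c) = ∑ m ∈ c.support, c m * g (e m) := by
  simp [vecOf, Finsupp.sum]

theorem apply_vecOf_filter_of_eq_zero (g : X →L[ℝ] ℝ) (p : ℕ → Prop) [DecidablePred p]
    (hg : ∀ m, ¬ p m → g (e m) = 0) (c : ℕ →₀ ℝ) :
    g (vecOf e (c.filter p)) = g (vecOf e c) := by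
  rw [apply_vecOf, apply_vecOf, Finsupp.support_filter, sum_filter]
  refine sum_congr rfl fun m _ => ?_
  by_cases hpm : p m
  · rw [if_pos hpm, Finsupp.filter_apply_pos _ _ hpm]
  · rw [if_neg hpm, hg m hpm, mul_zero]

theorem apply_vecOf_filter_eq_zero (g : X →L[ℝ] ℝ) (p : ℕ → Prop) [DecidablePred p]
    (hg : ∀ m, p m → g (e m) = 0) (c : ℕ →₀ ℝ) :
    g (vecOf e (c.filter p)) = 0 := by
  rw [apply_vecOf, Finsupp.support_filter]
  exact sum_eq_zero fun m hm => by rw [hg m (mem_filter.1 hm).2, mul_zero]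

theorem opNorm_le_of_forall_vecOf
    (hdense : (Submodule.span ℝ (Set.range e)).topologicalClosure = ⊤)
    (g : X →L[ℝ] ℝ) {M : ℝ} (hM : 0 ≤ M) (h : ∀ c, |g (vecOf e c)| ≤ M * ‖vecOf e c‖) :
    ‖g‖ ≤ M := by
  refine g.opNorm_le_bound hM fun x => ?_
  have hx : x ∈ closure (Submodule.span ℝ (Set.range e) : Set X) := by
    rw [← Submodule.topologicalClosure_coe, hdense]
    trivial
  refine closure_minimal (t := {x | |g x| ≤ M * ‖x‖}) (fun x hx => ?_)
    (isClosed_le (by fun_prop) (by fun_prop)) hx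
  obtain ⟨c, rfl⟩ := Finsupp.mem_span_range_iff_exists_finsupp.1 hx
  exact h c

theorem eq_zero_of_fsupp_eq_empty
    (hdense : (Submodule.span ℝ (Set.range e)).topologicalClosure = ⊤)
    {g : X →L[ℝ] ℝ} (hg : fsupp e g = ∅) : g = 0 := by
  refine ContinuousLinearMap.ext_on (Submodule.dense_iff_topologicalClosure_eq_top.2 hdense) ?_
  rintro _ ⟨m, rfl⟩
  by_contra hm
  exact (Set.eq_empty_iff_forall_notMem.1 hg m) hm

theorem fsupp_smul_subset (r : ℝ) (g : X →L[ℝ] ℝ) : fsupp e (r • g) ⊆ fsupp e g :=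
  fun m hm hg => hm (by simp [hg])

theorem fsupp_sum_subset {ι : Type*} (s : Finset ι) (y : ι → X →L[ℝ] ℝ) :
    fsupp e (∑ t ∈ s, y t) ⊆ ⋃ t ∈ s, fsupp e (y t) := by
  intro m hm
  by_contra hnot
  simp only [Set.mem_iUnion, not_exists] at hnot
  refine hm ?_
  rw [_root_.sum_apply]
  exact sum_eq_zero fun t ht => not_not.1 (hnot t ht)

theorem fsupp_extend_val (e : ℕ → X) {N : ℕ} (y : Fin N → X →L[ℝ] ℝ) (t : ℕ) :
    fsupp e (Function.extend Fin.val y 0 t) = if h : t < N then fsupp e (y ⟨t, h⟩) else ∅ := by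
  split_ifs with h
  · exact congrArg (fsupp e) (Fin.val_injective.extend_apply y 0 ⟨t, h⟩)
  · rw [Function.extend_apply' _ _ _ fun ⟨k, hk⟩ => h (hk ▸ k.2)]
    ext m
    simp [fsupp]

theorem isDualBlockSeq_extend_val {N : ℕ} {y : Fin N → X →L[ℝ] ℝ}
    (hfin : ∀ k, (fsupp e (y k)).Finite)
    (hsucc : ∀ k l : Fin N, k < l → FsuppBefore e (y k) (y l)) :
    IsDualBlockSeq e (Function.extend Fin.val y 0) := by
  refine ⟨fun t => ?_, fun i j hij a ha b hb => ?_⟩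
  · rw [fsupp_extend_val]
    split_ifs
    exacts [hfin _, Set.finite_empty]
  · rw [fsupp_extend_val] at ha hb
    split_ifs at ha hb
    · exact hsucc _ _ hij a ha b hb
    all_goals simp_all

theorem Bimonotone.norm_vecOf_filter_Ico_le (hbm : Bimonotone e) (c : ℕ →₀ ℝ) (a b : ℕ) :
    ‖vecOf e (c.filter (· ∈ Ico a b))‖ ≤ ‖vecOf e c‖ := by
  rcases Nat.eq_zero_or_pos b with rfl | hb
  · have h0 : c.filter (· ∈ Ico a 0) = 0 := by ext; simp
    rw [h0, vecOf, Finsupp.sum_zero_index, norm_zero]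
    exact norm_nonneg _
  convert hbm c a (b - 1) using 4
  ext m
  simp only [mem_Ico, mem_Icc]
  omega

theorem Bimonotone.opNorm_le_opNorm_add
    (hdense : (Submodule.span ℝ (Set.range e)).topologicalClosure = ⊤) (hbm : Bimonotone e)
    {g h : X →L[ℝ] ℝ} {a b : ℕ} (hg : ∀ m, m ∉ Icc a b → g (e m) = 0)
    (hh : ∀ m ∈ Icc a b, h (e m) = 0) : ‖g‖ ≤ ‖g + h‖ := by
  refine opNorm_le_of_forall_vecOf hdense g (norm_nonneg _) fun c => ?_
  have hproj : g (vecOf e c) = (g + h) (vecOf e (c.filter (· ∈ Icc a b))) := by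
    rw [add_apply, apply_vecOf_filter_eq_zero h _ hh, add_zero,
      apply_vecOf_filter_of_eq_zero g _ hg]
  rw [hproj, ← Real.norm_eq_abs]
  exact ((g + h).le_opNorm _).trans (mul_le_mul_of_nonneg_left (hbm c a b) (norm_nonneg _))

theorem Bimonotone.opNorm_le_opNorm_add_add
    (hdense : (Submodule.span ℝ (Set.range e)).topologicalClosure = ⊤) (hbm : Bimonotone e)
    {g h₁ h₂ : X →L[ℝ] ℝ} (hg : (fsupp e g).Finite) (h₁g : FsuppBefore e h₁ g)
    (gh₂ : FsuppBefore e g h₂) : ‖g‖ ≤ ‖h₁ + g + h₂‖ := by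
  rcases (fsupp e g).eq_empty_or_nonempty with hempty | hne
  · simp [eq_zero_of_fsupp_eq_empty hdense hempty]
  have hne' : hg.toFinset.Nonempty := hg.toFinset_nonempty.2 hne
  have hmin := hg.mem_toFinset.1 (hg.toFinset.min'_mem hne')
  have hmax := hg.mem_toFinset.1 (hg.toFinset.max'_mem hne')
  rw [show h₁ + g + h₂ = g + (h₁ + h₂) by abel]
  refine hbm.opNorm_le_opNorm_add hdense (a := hg.toFinset.min' hne')
    (b := hg.toFinset.max' hne') (fun m hm => ?_) (fun m hm => ?_)
  · by_contra hgm
    exact hm (mem_Icc.2 ⟨min'_le _ _ (hg.mem_toFinset.2 hgm), le_max' _ _ (hg.mem_toFinset.2 hgm)⟩)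
  · rw [mem_Icc] at hm
    have h₁m : h₁ (e m) = 0 := by_contra fun hm₁ => (h₁g m hm₁ _ hmin).not_ge hm.1
    have h₂m : h₂ (e m) = 0 := by_contra fun hm₂ => (gh₂ _ hmax m hm₂).not_ge hm.2
    simp [h₁m, h₂m]

namespace IsDualBlockSeq

variable {y : ℕ → X →L[ℝ] ℝ}

theorem finite_fsupp_sum (hy : IsDualBlockSeq e y) (s : Finset ℕ) :
    (fsupp e (∑ t ∈ s, y t)).Finite :=
  (s.finite_toSet.biUnion fun t _ => hy.1 t).subset (fsupp_sum_subset s y)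

theorem fsuppBefore_sum (hy : IsDualBlockSeq e y) {s s' : Finset ℕ}
    (hss' : ∀ i ∈ s, ∀ j ∈ s', i < j) : FsuppBefore e (∑ t ∈ s, y t) (∑ t ∈ s', y t) := by
  intro a ha b hb
  obtain ⟨i, hi, hai⟩ := Set.mem_iUnion₂.1 (fsupp_sum_subset s y ha)
  obtain ⟨j, hj, hbj⟩ := Set.mem_iUnion₂.1 (fsupp_sum_subset s' y hb)
  exact hy.2 i j (hss' i hi j hj) a hai b hbj

theorem norm_sum_Ico_le
    (hdense : (Submodule.span ℝ (Set.range e)).topologicalClosure = ⊤) (hbm : Bimonotone e)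
    (hy : IsDualBlockSeq e y) {a b c d : ℕ} (hab : a ≤ b) (hcd : c ≤ d) :
    ‖∑ t ∈ Ico b c, y t‖ ≤ ‖∑ t ∈ Ico a d, y t‖ := by
  rcases le_or_gt c b with hcb | hbc
  · simp [Ico_eq_empty_of_le hcb]
  rw [← sum_Ico_consecutive _ (hab.trans hbc.le) hcd, ← sum_Ico_consecutive _ hab hbc.le]
  refine hbm.opNorm_le_opNorm_add_add hdense (hy.finite_fsupp_sum _) (hy.fsuppBefore_sum ?_)
    (hy.fsuppBefore_sum ?_) <;>
  · intro i hi j hj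
    simp only [mem_Ico] at hi hj
    omega

theorem norm_sum_range_le_flog
    (hdense : (Submodule.span ℝ (Set.range e)).topologicalClosure = ⊤) (hbm : Bimonotone e)
    (hlf : LowerFEst e) (hy : IsDualBlockSeq e y) {N : ℕ} (hnorm : ∀ t < N, ‖y t‖ ≤ 1) :
    ‖∑ t ∈ range N, y t‖ ≤ flog N := by
  obtain ⟨p, hp, hpy⟩ := exists_monotone_cuts hy.1 hy.2
  have hflog : 0 ≤ flog N := Real.logb_nonneg one_lt_two (by simp)
  refine opNorm_le_of_forall_vecOf hdense _ hflog fun c => ?_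
  set piece : Fin N → ℕ →₀ ℝ := fun t => c.filter (· ∈ Ico (p t) (p (t + 1)))
  have hpiece (t : Fin N) : y t (vecOf e c) = y t (vecOf e (piece t)) :=
    (apply_vecOf_filter_of_eq_zero _ _
      (fun m hm => by_contra fun h => hm (mem_Ico.2 (hpy t m h))) c).symm
  have hsucc : ∀ i j : Fin N, i < j → FsuppLt (piece i) (piece j) := by
    intro i j hij a ha b hb
    simp only [piece, Finsupp.support_filter, mem_filter, mem_Ico] at ha hb
    have : p (i + 1) ≤ p j := hp (Nat.succ_le_of_lt hij)
    omega
  have hsum : ‖∑ t, vecOf e (piece t)‖ ≤ ‖vecOf e c‖ := by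
    rw [← vecOf_sum, Fin.sum_univ_eq_sum_range (fun t => c.filter (· ∈ Ico (p t) (p (t + 1)))),
      Finsupp.sum_filter_Ico_eq hp]
    exact hbm.norm_vecOf_filter_Ico_le c _ _
  calc |(∑ t ∈ range N, y t) (vecOf e c)| = |∑ t : Fin N, y t (vecOf e (piece t))| := by
        rw [_root_.sum_apply, ← Fin.sum_univ_eq_sum_range]
        simp_rw [hpiece]
    _ ≤ ∑ t : Fin N, ‖vecOf e (piece t)‖ := by
        refine (abs_sum_le_sum_abs _ _).trans (sum_le_sum fun t _ => ?_)
        calc |y t (vecOf e (piece t))| ≤ ‖y t‖ * ‖vecOf e (piece t)‖ := (y t).le_opNorm _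
          _ ≤ ‖vecOf e (piece t)‖ := mul_le_of_le_one_left (norm_nonneg _) (hnorm t t.2)
    _ ≤ flog N * ‖∑ t, vecOf e (piece t)‖ := by
        rcases N.eq_zero_or_pos with rfl | hN
        · simp
        have hest := hlf N piece hsucc
        have hpos : 0 < flog N := Real.logb_pos one_lt_two (by simpa using hN)
        rwa [one_div, inv_mul_le_iff₀ hpos] at hest
    _ ≤ flog N * ‖vecOf e c‖ := mul_le_mul_of_nonneg_left hsum hflog

end IsDualBlockSeq

end Dual

section Averages

variable {X : Type} [NormedAddCommGroup X] [NormedSpace ℝ X] {e : ℕ → X}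

theorem isLinftyAvgDual_smul_inv_norm {n : ℕ} {C : ℝ} (hC : 0 < C) {g : Fin n → X →L[ℝ] ℝ}
    (hfin : ∀ i, (fsupp e (g i)).Finite) (hsucc : ∀ i j, i < j → FsuppBefore e (g i) (g j))
    (hpos : 0 < ‖∑ i, g i‖) (hbal : ∀ i, ‖∑ i, g i‖ ≤ C * ‖g i‖) :
    IsLinftyAvgDual e n C (fun i => ‖∑ i, g i‖⁻¹ • g i) := by
  refine ⟨?_, fun i => (hfin i).subset (fsupp_smul_subset _ _), fun i j hij a ha b hb =>
    hsucc i j hij a (fsupp_smul_subset _ _ ha) b (fsupp_smul_subset _ _ hb), fun i => ?_⟩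
  · rw [← smul_sum, norm_smul, norm_inv, norm_norm, inv_mul_cancel₀ hpos.ne']
  · rw [norm_smul, norm_inv, norm_norm, one_div, inv_mul_eq_div, le_div_iff₀ hpos,
      inv_mul_le_iff₀ hC]
    exact hbal i

theorem IsDualBlockSeq.isLinftyAvgDual_blocks {y : ℕ → X →L[ℝ] ℝ} (hy : IsDualBlockSeq e y)
    {n a m : ℕ} {C : ℝ} (hC : 0 < C) (hpos : 0 < ‖∑ t ∈ Ico a (a + n * m), y t‖)
    (hbal : ∀ i : Fin n,
      ‖∑ t ∈ Ico a (a + n * m), y t‖ ≤ C * ‖∑ t ∈ Ico (a + i * m) (a + (i + 1) * m), y t‖) :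
    IsLinftyAvgDual e n C (fun i : Fin n =>
      ‖∑ t ∈ Ico a (a + n * m), y t‖⁻¹ • ∑ t ∈ Ico (a + i * m) (a + (i + 1) * m), y t) := by
  rw [sum_Ico_eq_sum_blocks, ← Fin.sum_univ_eq_sum_range] at hpos hbal ⊢
  refine isLinftyAvgDual_smul_inv_norm hC (fun i => hy.finite_fsupp_sum _)
    (fun i j hij => hy.fsuppBefore_sum fun s hs t ht => ?_) hpos hbal
  have : ((i : ℕ) + 1) * m ≤ j * m := Nat.mul_le_mul_right _ hij
  simp only [mem_Ico] at hs ht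
  omega

theorem exists_finsets_isLinftyAvgDual {N n a m : ℕ} {y : Fin N → X →L[ℝ] ℝ}
    (hy : IsDualBlockSeq e (Function.extend Fin.val y 0)) (hm : 0 < m) (hamN : a + n * m ≤ N)
    {C : ℝ} (hC : 0 < C) (hpos : 0 < ‖∑ t ∈ Ico a (a + n * m), Function.extend Fin.val y 0 t‖)
    (hbal : ∀ i : Fin n, ‖∑ t ∈ Ico a (a + n * m), Function.extend Fin.val y 0 t‖ ≤
      C * ‖∑ t ∈ Ico (a + i * m) (a + (i + 1) * m), Function.extend Fin.val y 0 t‖) :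
    ∃ F : Fin n → Finset (Fin N), (∀ i, (F i).Nonempty) ∧
      (∀ i j : Fin n, i < j → ∀ a ∈ F i, ∀ b ∈ F j, a < b) ∧
      ∃ lam : ℝ, 0 < lam ∧ IsLinftyAvgDual e n C (fun i => lam • ∑ k ∈ F i, y k) := by
  refine ⟨fun i => (Ico (a + i * m) (a + (i + 1) * m)).preimage Fin.val Fin.val_injective.injOn,
    fun i => ⟨⟨a + i * m, ?_⟩, ?_⟩, fun i j hij s hs t ht => ?_, _, inv_pos.2 hpos, ?_⟩
  · have : ((i : ℕ) + 1) * m ≤ n * m := Nat.mul_le_mul_right _ i.2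
    rw [add_one_mul] at this
    omega
  · simp only [mem_preimage, mem_Ico, add_one_mul]
    omega
  · have : ((i : ℕ) + 1) * m ≤ j * m := Nat.mul_le_mul_right _ hij
    simp only [mem_preimage, mem_Ico] at hs ht
    exact Fin.lt_def.2 (by omega)
  · simp only [sum_preimage_val_eq_sum_extend]
    exact hy.isLinftyAvgDual_blocks hC hpos hbal

end Averages

theorem stmt1_general {X : Type} [NormedAddCommGroup X] [NormedSpace ℝ X]
    (e : ℕ → X)
    (hdense : (Submodule.span ℝ (Set.range e)).topologicalClosure = ⊤)
    (hbm : Bimonotone e) (hlf : LowerFEst e)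
    (n : ℕ) (hn : 0 < n) (ε : ℝ) (hε : 0 < ε) :
    ∃ N : ℕ, 0 < N ∧
      ∀ y : Fin N → X →L[ℝ] ℝ, (∀ k, ‖y k‖ = 1) → (∀ k, (fsupp e (y k)).Finite) →
        (∀ k l : Fin N, k < l → ∀ a ∈ fsupp e (y k), ∀ b ∈ fsupp e (y l), a < b) →
        ∃ F : Fin n → Finset (Fin N), (∀ i, (F i).Nonempty) ∧
          (∀ i j : Fin n, i < j → ∀ a ∈ F i, ∀ b ∈ F j, a < b) ∧
          ∃ lam : ℝ, 0 < lam ∧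
            IsLinftyAvgDual e n (1 + ε) (fun i => lam • ∑ k ∈ F i, y k) := by
  obtain ⟨k, hk⟩ := exists_flog_pow_lt hn hε
  refine ⟨n ^ k, pow_pos hn k, fun y hy1 hy2 hy3 => ?_⟩
  set z := Function.extend Fin.val y 0
  have hz : IsDualBlockSeq e z := isDualBlockSeq_extend_val hy2 hy3
  have hz1 (t : ℕ) (ht : t < n ^ k) : ‖z t‖ = 1 :=
    (congrArg norm (Fin.val_injective.extend_apply y 0 ⟨t, ht⟩)).trans (hy1 _)
  rcases exists_balanced_blocks_or_pow_le (fun a b => ‖∑ t ∈ Ico a b, z t‖) (N := n ^ k) hn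
    (by linarith : (0 : ℝ) ≤ 1 + ε) (fun t ht => by simp [hz1 t ht]) k 0 (by simp)
    with ⟨a, m, hm, -, hamk, hbal⟩ | hgrow
  · rw [zero_add] at hamk
    have hnm : 0 < n * m := Nat.mul_pos hn hm
    have hpos : 0 < ‖∑ t ∈ Ico a (a + n * m), z t‖ := by
      have := hz.norm_sum_Ico_le hdense hbm (le_refl a) (show a + 1 ≤ a + n * m by omega)
      rw [Nat.Ico_succ_singleton, sum_singleton, hz1 a (by omega)] at this
      linarith
    exact exists_finsets_isLinftyAvgDual hz hm hamk (by linarith) hpos hbal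
  · have hupper := hz.norm_sum_range_le_flog hdense hbm hlf fun t ht => (hz1 t ht).le
    simp only [zero_add, ← range_eq_Ico] at hgrow
    linarith

/-- existence of `ℓ∞₊ⁿ`-averages in the span of any long enough
normalized block sequence of the dual. -/
theorem stmt1 {X : Type} [NormedAddCommGroup X] [NormedSpace ℝ X] [CompleteSpace X]
    (e : ℕ → X)
    (hdense : (Submodule.span ℝ (Set.range e)).topologicalClosure = ⊤)
    (hrefl : Function.Surjective (NormedSpace.inclusionInDoubleDual ℝ X))
    (hbm : Bimonotone e) (hlf : LowerFEst e)
    (n : ℕ) (hn : 0 < n) (ε : ℝ) (hε : 0 < ε) :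
    ∃ N : ℕ, 0 < N ∧
      ∀ y : Fin N → X →L[ℝ] ℝ, (∀ k, ‖y k‖ = 1) → (∀ k, (fsupp e (y k)).Finite) →
        (∀ k l : Fin N, k < l → ∀ a ∈ fsupp e (y k), ∀ b ∈ fsupp e (y l), a < b) →
        ∃ F : Fin n → Finset (Fin N), (∀ i, (F i).Nonempty) ∧
          (∀ i j : Fin n, i < j → ∀ a ∈ F i, ∀ b ∈ F j, a < b) ∧
          ∃ lam : ℝ, 0 < lam ∧
            IsLinftyAvgDual e n (1 + ε) (fun i => lam • ∑ k ∈ F i, y k) :=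
  stmt1_general e hdense hbm hlf n hn ε hε
end
end

section
/- Let X be a Banach space with a bimonotone basis. Suppose x* = ∑_{i=1}^n xᵢ* is an ℓ∞₊ⁿ-average with constant 1+ε, and for each i let xᵢ be a vector with ‖xᵢ‖ ≤ 1, range xᵢ ⊆ range xᵢ*, and xᵢ*(xᵢ) ≥ α‖xᵢ*‖ for some α > 0. Then x = ∑_{i=1}^n xᵢ is an ℓ₁₊ⁿ-vector with constant (1+ε)/α, and x*(x) ≥ (α/(1+ε))‖x‖. -/
open scoped BigOperators Classical

noncomputable section

/-- `x = ∑ᵢ xᵢ` (with `xᵢ = vecOf e (c i)`) is an `ℓ₁₊ⁿ`-vector with constant `C`: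
a nonzero multiple of an `ℓ₁₊ⁿ`-average with constant `C`. -/
def IsL1Vec {X : Type} [NormedAddCommGroup X] [NormedSpace ℝ X]
    (e : ℕ → X) (n : ℕ) (C : ℝ) (c : Fin n → ℕ →₀ ℝ) : Prop :=
  (∀ i j : Fin n, i < j → FsuppLt (c i) (c j)) ∧ (∑ i, vecOf e (c i)) ≠ 0 ∧
  ∀ i, ‖vecOf e (c i)‖ ≤ C / n * ‖∑ i, vecOf e (c i)‖

/-- vectors normed by the constituents of an `ℓ∞₊ⁿ`-average sum to an
`ℓ₁₊ⁿ`-vector which is well normed by the average. -/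
theorem stmt2 {X : Type} [NormedAddCommGroup X] [NormedSpace ℝ X]
    (e : ℕ → X) (hbm : Bimonotone e)
    (n : ℕ) (hn : 0 < n) (ε α : ℝ) (hε : 0 < ε) (hα : 0 < α)
    (g : Fin n → X →L[ℝ] ℝ) (havg : IsLinftyAvgDual e n (1 + ε) g)
    (c : Fin n → ℕ →₀ ℝ)
    (hc1 : ∀ i, ‖vecOf e (c i)‖ ≤ 1)
    (hrange : ∀ i, ∀ m ∈ (c i).support,
      sInf (fsupp e (g i)) ≤ m ∧ m ≤ sSup (fsupp e (g i)))
    (hnorm : ∀ i, α * ‖g i‖ ≤ g i (vecOf e (c i))) :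
    IsL1Vec e n ((1 + ε) / α) c ∧
      (α / (1 + ε)) * ‖∑ i, vecOf e (c i)‖ ≤ (∑ i, g i) (∑ i, vecOf e (c i)) := by
  obtain ⟨hnorm1, hfin, hord, hgi⟩ := havg
  have h1e : (0:ℝ) < 1 + ε := by linarith
  have hval : ∀ (f : X →L[ℝ] ℝ) (d : ℕ →₀ ℝ),
      f (vecOf e d) = d.sum fun m a => a * f (e m) := by
    intro f d
    simp [vecOf, map_finsuppSum]
  have hne : ∀ i, (fsupp e (g i)).Nonempty := by
    intro i
    by_contra h
    rw [Set.not_nonempty_iff_eq_empty] at h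
    have hz : g i (vecOf e (c i)) = 0 := by
      rw [hval, Finsupp.sum]
      apply Finset.sum_eq_zero
      intro m _
      have : g i (e m) = 0 := by
        by_contra h'
        have : m ∈ fsupp e (g i) := h'
        simp [h] at this
      simp [this]
    have h1 := hnorm i
    have h2 := hgi i
    rw [hz] at h1
    have : α * ‖g i‖ > 0 := by
      apply mul_pos hα
      have : (0:ℝ) < 1 / (1 + ε) := by positivity
      linarith
    linarith
  have hcross : ∀ i j : Fin n, j ≠ i → g j (vecOf e (c i)) = 0 := by
    intro i j hji
    rw [hval, Finsupp.sum]
    apply Finset.sum_eq_zero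
    intro m hm
    have hm' := hrange i m hm
    have hzero : g j (e m) = 0 := by
      by_contra h'
      have hmj : m ∈ fsupp e (g j) := h'
      rcases lt_or_gt_of_ne hji with h | h
      · have hs : sInf (fsupp e (g i)) ∈ fsupp e (g i) := Nat.sInf_mem (hne i)
        exact absurd (hord j i h m hmj _ hs) (not_lt.2 hm'.1)
      · have hs : sSup (fsupp e (g i)) ∈ fsupp e (g i) := (hne i).csSup_mem (hfin i)
        exact absurd (hord i j h _ hs m hmj) (not_lt.2 hm'.2)
    simp [hzero]
  have hsum : (∑ j, g j) (∑ i, vecOf e (c i)) = ∑ i, g i (vecOf e (c i)) := by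
    rw [ContinuousLinearMap.sum_apply]
    rw [Finset.sum_congr rfl (fun j _ => map_sum (g j) _ _)]
    rw [Finset.sum_comm]
    apply Finset.sum_congr rfl
    intro i _
    rw [Finset.sum_eq_single i (fun j _ hji => hcross i j hji)
      (fun h => absurd (Finset.mem_univ i) h)]
  have hlb : α * (n / (1 + ε)) ≤ (∑ j, g j) (∑ i, vecOf e (c i)) := by
    rw [hsum]
    have : ∀ i ∈ Finset.univ (α := Fin n), α * (1 / (1 + ε)) ≤ g i (vecOf e (c i)) := by
      intro i _
      calc α * (1 / (1 + ε)) ≤ α * ‖g i‖ := by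
            apply mul_le_mul_of_nonneg_left (hgi i) hα.le
        _ ≤ g i (vecOf e (c i)) := hnorm i
    calc α * (n / (1 + ε)) = ∑ _i : Fin n, α * (1 / (1 + ε)) := by
          simp [Finset.sum_const]; ring
      _ ≤ ∑ i, g i (vecOf e (c i)) := Finset.sum_le_sum this
  have hub : (∑ j, g j) (∑ i, vecOf e (c i)) ≤ ‖∑ i, vecOf e (c i)‖ := by
    calc (∑ j, g j) (∑ i, vecOf e (c i))
        ≤ ‖(∑ j, g j) (∑ i, vecOf e (c i))‖ := le_abs_self _
      _ ≤ ‖∑ j, g j‖ * ‖∑ i, vecOf e (c i)‖ := ContinuousLinearMap.le_opNorm _ _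
      _ = ‖∑ i, vecOf e (c i)‖ := by rw [hnorm1, one_mul]
  have hxlb : α * (n / (1 + ε)) ≤ ‖∑ i, vecOf e (c i)‖ := hlb.trans hub
  have hxub : ‖∑ i, vecOf e (c i)‖ ≤ n := by
    calc ‖∑ i, vecOf e (c i)‖ ≤ ∑ i, ‖vecOf e (c i)‖ := norm_sum_le _ _
      _ ≤ ∑ _i : Fin n, (1:ℝ) := Finset.sum_le_sum fun i _ => hc1 i
      _ = n := by simp
  have hnpos : (0:ℝ) < n := by exact_mod_cast hn
  have hxpos : (0:ℝ) < ‖∑ i, vecOf e (c i)‖ := by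
    have : (0:ℝ) < α * (n / (1 + ε)) := by positivity
    linarith
  have hlt : ∀ i j : Fin n, i < j → FsuppLt (c i) (c j) := by
    intro i j hij a ha b hb
    have h1 := (hrange i a ha).2
    have h2 := (hrange j b hb).1
    have hs : sSup (fsupp e (g i)) ∈ fsupp e (g i) := (hne i).csSup_mem (hfin i)
    have ht : sInf (fsupp e (g j)) ∈ fsupp e (g j) := Nat.sInf_mem (hne j)
    have := hord i j hij _ hs _ ht
    omega
  refine ⟨⟨hlt, norm_pos_iff.mp hxpos, fun i => ?_⟩, ?_⟩
  · calc ‖vecOf e (c i)‖ ≤ 1 := hc1 i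
      _ ≤ (1 + ε) / α / n * ‖∑ i, vecOf e (c i)‖ := by
          rw [← div_le_iff₀' (by positivity : (0:ℝ) < (1 + ε) / α / ↑n)]
          calc (1:ℝ) / ((1 + ε) / α / ↑n) = α * (↑n / (1 + ε)) := by
                field_simp
            _ ≤ ‖∑ i, vecOf e (c i)‖ := hxlb
  · calc (α / (1 + ε)) * ‖∑ i, vecOf e (c i)‖ ≤ (α / (1 + ε)) * n := by
          apply mul_le_mul_of_nonneg_left hxub (by positivity)
      _ = α * (n / (1 + ε)) := by ring
      _ ≤ _ := hlb
end
end

section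
/- If a Banach space X has a basis that is tight, then X is not minimal; more precisely, no subspace of X embeds into all of its own infinite-dimensional subspaces. -/
open scoped BigOperators Classical

noncomputable section

/-!
Suppose `Z` embeds into each of its closed infinite-dimensional subspaces, and let `I` witness
that `Z` is tight in `e`. A gliding hump produces unit vectors `z k ∈ Z`, indices `t k → ∞` and
finitely supported `v k` with `‖z k - v k‖` tiny and `supp v k` disjoint from every `I (t j)`.
Taking each `z k` in the kernels of norming functionals of the earlier ones gives biorthogonal
functionals `ψ k` of norm at most `2 ^ k`, so `x ↦ x + ∑ ψ k x • (v k - z k)` is an isomorphic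
embedding of `X` sending `z k` to `v k`. It embeds the closed span `W` of the `z k` into
`[e n : n ∉ ⋃ I (t j)]`; since `Z` embeds into `W`, this contradicts tightness.
-/

open Set

section Embeds

variable {Y Z U : Type*} [NormedAddCommGroup Y] [NormedSpace ℝ Y] [NormedAddCommGroup Z]
  [NormedSpace ℝ Z] [NormedAddCommGroup U] [NormedSpace ℝ U]

theorem Embeds.trans (h₁ : Embeds Y Z) (h₂ : Embeds Z U) : Embeds Y U := by
  obtain ⟨S, a, ha, hS⟩ := h₁
  obtain ⟨T, b, hb, hT⟩ := h₂
  refine ⟨T.comp S, b * a, mul_pos hb ha, fun y => ?_⟩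
  calc b * a * ‖y‖ = b * (a * ‖y‖) := mul_assoc _ _ _
    _ ≤ b * ‖S y‖ := by gcongr; exact hS y
    _ ≤ ‖T (S y)‖ := hT _

theorem embeds_submodule_of_forall_mem (T : Y →L[ℝ] Z) {c : ℝ} (hc : 0 < c)
    (hT : ∀ y, c * ‖y‖ ≤ ‖T y‖) (M : Submodule ℝ Z) (hM : ∀ y, T y ∈ M) : Embeds Y M :=
  ⟨T.codRestrict M hM, c, hc, hT⟩

end Embeds

section SuccessiveSets

variable {I : ℕ → Finset ℕ}

theorem finite_setOf_not_disjoint (hI : ∀ i j : ℕ, i < j → ∀ a ∈ I i, ∀ b ∈ I j, a < b)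
    (F : Finset ℕ) : {i | ¬ Disjoint (I i) F}.Finite := by
  have hsub : ∀ a, {i | a ∈ I i}.Subsingleton := by
    intro a i hi j hj
    by_contra hij
    rcases lt_or_gt_of_ne hij with h | h
    · exact lt_irrefl a (hI i j h a hi a hj)
    · exact lt_irrefl a (hI j i h a hj a hi)
  refine (F.finite_toSet.biUnion fun a _ => (hsub a).finite).subset fun i hi => ?_
  obtain ⟨a, hai, haF⟩ := Finset.not_disjoint_iff.mp hi
  exact mem_biUnion haF hai

theorem exists_gt_disjoint (hI : ∀ i j : ℕ, i < j → ∀ a ∈ I i, ∀ b ∈ I j, a < b)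
    (F : Finset ℕ) (b : ℕ) : ∃ t, b < t ∧ Disjoint (I t) F := by
  obtain ⟨t, ht, hbt⟩ := (finite_setOf_not_disjoint hI F).infinite_compl.exists_gt b
  exact ⟨t, hbt, not_not.mp ht⟩

end SuccessiveSets

section SpanCompl

variable {X : Type*} [NormedAddCommGroup X] [NormedSpace ℝ X]

theorem finiteDimensional_quotient_spanCompl {e : ℕ → X}
    (hbasis : (Submodule.span ℝ (range e)).topologicalClosure = ⊤) (G : Finset ℕ) :
    FiniteDimensional ℝ (X ⧸ spanCompl e G) := by
  set V := spanCompl e G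
  set P := Submodule.span ℝ (e '' G)
  have : FiniteDimensional ℝ P := FiniteDimensional.span_of_finite ℝ (G.finite_toSet.image e)
  have hspan : Submodule.span ℝ (range e) ≤ V ⊔ P := by
    rw [Submodule.span_le]
    rintro _ ⟨n, rfl⟩
    by_cases hn : n ∈ (G : Set ℕ)
    · exact Submodule.mem_sup_right (Submodule.subset_span ⟨n, hn, rfl⟩)
    · exact Submodule.mem_sup_left
        (Submodule.le_topologicalClosure _ (Submodule.subset_span ⟨n, hn, rfl⟩))
  have htop : V ⊔ P = ⊤ := by
    rw [eq_top_iff, ← hbasis]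
    exact Submodule.topologicalClosure_minimal _ hspan
      (Submodule.isClosed_sup_finiteDimensional _ _ (Submodule.isClosed_topologicalClosure _))
  refine Module.Finite.of_surjective (V.mkQ.comp P.subtype) ?_
  rw [← LinearMap.range_eq_top, LinearMap.range_comp, Submodule.range_subtype,
    Submodule.map_mkQ_eq_top, htop]

theorem exists_support_subset_norm_sub_lt (e : ℕ → X) {S : Set ℕ} {z : X}
    (hz : z ∈ spanCompl e S) {ε : ℝ} (hε : 0 < ε) :
    ∃ l : ℕ →₀ ℝ, (l.support : Set ℕ) ⊆ Sᶜ ∧ ‖z - Finsupp.linearCombination ℝ e l‖ < ε := by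
  obtain ⟨y, hy, hdist⟩ := Metric.mem_closure_iff.mp hz ε hε
  obtain ⟨l, hl, rfl⟩ := (Finsupp.mem_span_image_iff_linearCombination ℝ).mp hy
  exact ⟨l, (Finsupp.mem_supported ℝ l).mp hl, by rwa [dist_eq_norm] at hdist⟩

theorem linearCombination_mem_spanCompl (e : ℕ → X) {S : Set ℕ} {l : ℕ →₀ ℝ}
    (hl : (l.support : Set ℕ) ⊆ Sᶜ) : Finsupp.linearCombination ℝ e l ∈ spanCompl e S :=
  Submodule.le_topologicalClosure _
    ((Finsupp.mem_span_image_iff_linearCombination ℝ).mpr ⟨l, hl, rfl⟩)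

theorem exists_mem_ker_norm_eq_one {E : Type*} [AddCommGroup E] [Module ℝ E]
    [FiniteDimensional ℝ E] (Z : Submodule ℝ X) (hZ : ¬ FiniteDimensional ℝ Z)
    (f : X →ₗ[ℝ] E) : ∃ z ∈ Z, f z = 0 ∧ ‖z‖ = 1 := by
  have hker : LinearMap.ker (f.comp Z.subtype) ≠ ⊥ := fun h =>
    hZ (FiniteDimensional.of_injective _ (LinearMap.ker_eq_bot.mp h))
  obtain ⟨w, hw, hw0⟩ := Submodule.exists_mem_ne_zero_of_ne_bot hker
  have hw0' : (w : X) ≠ 0 := by simpa using hw0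
  refine ⟨(‖(w : X)‖⁻¹ : ℝ) • (w : X), Z.smul_mem _ w.2, ?_, norm_smul_inv_norm hw0'⟩
  rw [map_smul, show f w = 0 from hw, smul_zero]

end SpanCompl

section Biorthogonal

variable {X : Type*} [NormedAddCommGroup X] [NormedSpace ℝ X]

def dualSeq (φ : ℕ → X →L[ℝ] ℝ) (z : ℕ → X) : ℕ → X →L[ℝ] ℝ
  | k => φ k - ∑ m : Fin k, φ k (z m) • dualSeq φ z m

theorem dualSeq_eq (φ : ℕ → X →L[ℝ] ℝ) (z : ℕ → X) (k : ℕ) :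
    dualSeq φ z k = φ k - ∑ m ∈ Finset.range k, φ k (z m) • dualSeq φ z m := by
  rw [dualSeq, Fin.sum_univ_eq_sum_range (fun m => φ k (z m) • dualSeq φ z m)]

theorem dualSeq_apply {φ : ℕ → X →L[ℝ] ℝ} {z : ℕ → X} (hdiag : ∀ k, φ k (z k) = 1)
    (hlow : ∀ m n, m < n → φ m (z n) = 0) (k j : ℕ) :
    dualSeq φ z k (z j) = if j = k then 1 else 0 := by
  induction k using Nat.strong_induction_on generalizing j with
  | _ k ih =>
    have hsum : ∑ m ∈ Finset.range k, φ k (z m) * dualSeq φ z m (z j) =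
        if j < k then φ k (z j) else 0 := by
      rw [Finset.sum_congr rfl fun m hm => by rw [ih m (Finset.mem_range.mp hm)]]
      simp [eq_comm (a := j)]
    rw [dualSeq_eq]
    simp only [sub_apply, sum_apply, smul_apply, smul_eq_mul, hsum]
    rcases lt_trichotomy j k with h | rfl | h
    · simp [h, h.ne]
    · simp [hdiag]
    · simp [h.not_gt, h.ne', hlow k j h]

theorem norm_dualSeq_le {φ : ℕ → X →L[ℝ] ℝ} {z : ℕ → X} (hφ : ∀ k, ‖φ k‖ ≤ 1)
    (hz : ∀ k, ‖z k‖ ≤ 1) (k : ℕ) : ‖dualSeq φ z k‖ ≤ 2 ^ k := by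
  induction k using Nat.strong_induction_on with
  | _ k ih =>
    have hcoef : ∀ m, ‖φ k (z m)‖ ≤ 1 := fun m =>
      ((φ k).le_opNorm (z m)).trans (mul_le_one₀ (hφ k) (norm_nonneg _) (hz m))
    calc ‖dualSeq φ z k‖
        ≤ ‖φ k‖ + ∑ m ∈ Finset.range k, ‖φ k (z m)‖ * ‖dualSeq φ z m‖ := by
          rw [dualSeq_eq]
          refine (norm_sub_le _ _).trans ?_
          gcongr
          exact (norm_sum_le _ _).trans_eq (by simp only [norm_smul])
      _ ≤ 1 + ∑ m ∈ Finset.range k, 2 ^ m := by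
          gcongr with m hm
          · exact hφ k
          · exact (mul_le_of_le_one_left (norm_nonneg _) (hcoef m)).trans
              (ih m (Finset.mem_range.mp hm))
      _ = 2 ^ k := by
          rw [geom_sum_eq (by norm_num : (2 : ℝ) ≠ 1)]
          ring

end Biorthogonal

section Perturbation

variable {X : Type*} [NormedAddCommGroup X] [NormedSpace ℝ X] [CompleteSpace X]

theorem exists_perturbation_of_biorthogonal {z v : ℕ → X} {ψ : ℕ → X →L[ℝ] ℝ} {δ : ℝ}
    (hψ : ∀ k j, ψ k (z j) = if j = k then 1 else 0)
    (hs : Summable fun k => ‖ψ k‖ * ‖v k - z k‖) (hδ : ∑' k, ‖ψ k‖ * ‖v k - z k‖ ≤ δ) :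
    ∃ T : X →L[ℝ] X, (∀ x, (1 - δ) * ‖x‖ ≤ ‖T x‖) ∧ ∀ k, T (z k) = v k := by
  set g : ℕ → X →L[ℝ] X := fun k => (ψ k).smulRight (v k - z k)
  have hg : Summable fun k => ‖g k‖ := by
    simpa only [g, ContinuousLinearMap.norm_smulRight_apply] using hs
  set K := ∑' k, g k
  have hK : ‖K‖ ≤ δ := by
    refine (norm_tsum_le_tsum_norm hg).trans (le_of_eq_of_le ?_ hδ)
    simp only [g, ContinuousLinearMap.norm_smulRight_apply]
  have hKz : ∀ j, K (z j) = v j - z j := by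
    intro j
    have happly := (ContinuousLinearMap.apply ℝ X (z j)).map_tsum hg.of_norm
    simp only [ContinuousLinearMap.apply_apply] at happly
    rw [happly, tsum_eq_single j]
    · simp [g, hψ]
    · intro k hk
      simp [g, hψ, Ne.symm hk]
  refine ⟨ContinuousLinearMap.id ℝ X + K, fun x => ?_, fun j => ?_⟩
  · have hKx : ‖K x‖ ≤ δ * ‖x‖ := (K.le_opNorm x).trans (by gcongr)
    have hx := norm_sub_norm_le x (-K x)
    simp only [add_apply, ContinuousLinearMap.id_apply]
    rw [sub_neg_eq_add, norm_neg] at hx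
    linarith
  · simp [hKz]

end Perturbation

section GlidingHump

variable {X : Type*} [NormedAddCommGroup X] [NormedSpace ℝ X]

/-- One step of the gliding hump: `l` is the coefficient vector of a finitely supported
approximant of `z`, `φ` norms `z`, and `I t` is the block reserved at this step. -/
structure Hump (X : Type*) [NormedAddCommGroup X] [NormedSpace ℝ X] where
  z : X
  φ : X →L[ℝ] ℝ
  l : ℕ →₀ ℝ
  t : ℕ

structure Hump.IsGood (e : ℕ → X) (I : ℕ → Finset ℕ) (Z : Submodule ℝ X) (ε : ℕ → ℝ)
    (x : Hump X) : Prop where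
  mem : x.z ∈ Z
  norm_z : ‖x.z‖ = 1
  norm_φ : ‖x.φ‖ = 1
  φ_z : x.φ x.z = 1
  disjoint : Disjoint x.l.support (I x.t)
  approx : ‖x.z - Finsupp.linearCombination ℝ e x.l‖ < ε x.t

structure Hump.Precedes (I : ℕ → Finset ℕ) (x y : Hump X) : Prop where
  t_lt : x.t < y.t
  φ_z : x.φ y.z = 0
  disjoint_left : Disjoint x.l.support (I y.t)
  disjoint_right : Disjoint y.l.support (I x.t)

variable {e : ℕ → X} {I : ℕ → Finset ℕ} {Z : Submodule ℝ X}

theorem exists_hump_precededBy (hbasis : (Submodule.span ℝ (range e)).topologicalClosure = ⊤)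
    (hI : ∀ i j : ℕ, i < j → ∀ a ∈ I i, ∀ b ∈ I j, a < b) (hZ : ¬ FiniteDimensional ℝ Z)
    {ε : ℕ → ℝ} (hε : ∀ n, 0 < ε n) (s : Finset (Hump X)) :
    ∃ y : Hump X, y.IsGood e I Z ε ∧ ∀ x ∈ s, x.Precedes I y := by
  obtain ⟨t, hst, hts⟩ :=
    exists_gt_disjoint hI (s.biUnion fun x => x.l.support) (s.sup fun x => x.t)
  set G := s.biUnion (fun x => I x.t) ∪ I t
  have := finiteDimensional_quotient_spanCompl hbasis G
  obtain ⟨z, hzZ, hz0, hz1⟩ := exists_mem_ker_norm_eq_one Z hZ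
    ((spanCompl e G).mkQ.prod (LinearMap.pi fun x : s => (x.1.φ : X →ₗ[ℝ] ℝ)))
  have hzG : z ∈ spanCompl e G := (Submodule.Quotient.mk_eq_zero _).mp (congrArg Prod.fst hz0)
  have hzφ : ∀ x : s, x.1.φ z = 0 := congrFun (congrArg Prod.snd hz0)
  obtain ⟨l, hlG, hlz⟩ := exists_support_subset_norm_sub_lt e hzG (hε t)
  have hlG : Disjoint l.support G := by
    rw [← Finset.disjoint_coe]; exact subset_compl_iff_disjoint_right.mp hlG
  obtain ⟨φ, hφ1, hφz⟩ := exists_dual_vector ℝ z (by simp [hz1])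
  refine ⟨⟨z, φ, l, t⟩,
    ⟨hzZ, hz1, hφ1, by simp [hφz, hz1], hlG.mono_right Finset.subset_union_right, hlz⟩,
    fun x hx => ⟨?_, hzφ ⟨x, hx⟩, ?_, ?_⟩⟩
  · exact (Finset.le_sup (f := fun x => x.t) hx).trans_lt hst
  · exact (hts.mono_right (Finset.subset_biUnion_of_mem (fun x => x.l.support) hx)).symm
  · exact hlG.mono_right ((Finset.subset_biUnion_of_mem (fun x => I x.t) hx).trans
      Finset.subset_union_left)

theorem exists_hump_seq (hbasis : (Submodule.span ℝ (range e)).topologicalClosure = ⊤)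
    (hI : ∀ i j : ℕ, i < j → ∀ a ∈ I i, ∀ b ∈ I j, a < b) (hZ : ¬ FiniteDimensional ℝ Z)
    {ε : ℕ → ℝ} (hε : ∀ n, 0 < ε n) :
    ∃ h : ℕ → Hump X, (∀ k, (h k).IsGood e I Z ε) ∧ StrictMono (fun k => (h k).t) ∧
      (∀ m n, m < n → (h m).φ (h n).z = 0) ∧ ∀ k j, Disjoint (h k).l.support (I (h j).t) := by
  obtain ⟨h, hgood, hprec⟩ :=
    exists_seq_of_forall_finset_exists _ _ fun s _ => exists_hump_precededBy hbasis hI hZ hε s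
  refine ⟨h, hgood, fun m n hmn => (hprec m n hmn).t_lt, fun m n hmn => (hprec m n hmn).φ_z,
    fun k j => ?_⟩
  rcases lt_trichotomy j k with hjk | rfl | hkj
  · exact (hprec j k hjk).disjoint_right
  · exact (hgood j).disjoint
  · exact (hprec k j hkj).disjoint_left

end GlidingHump

section Assembly

variable {X : Type*} [NormedAddCommGroup X] [NormedSpace ℝ X] [CompleteSpace X]
  {e : ℕ → X} {I : ℕ → Finset ℕ} {Z : Submodule ℝ X}

theorem exists_operator_mapsTo_spanCompl
    (hbasis : (Submodule.span ℝ (range e)).topologicalClosure = ⊤)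
    (hI : ∀ i j : ℕ, i < j → ∀ a ∈ I i, ∀ b ∈ I j, a < b) (hZ : ¬ FiniteDimensional ℝ Z) :
    ∃ (z : ℕ → X) (t : ℕ → ℕ) (T : X →L[ℝ] X), StrictMono t ∧ (∀ k, z k ∈ Z) ∧
      LinearIndependent ℝ z ∧ (∀ x, ‖x‖ / 2 ≤ ‖T x‖) ∧
      ∀ k, T (z k) ∈ spanCompl e (⋃ i ∈ range t, (I i : Set ℕ)) := by
  obtain ⟨h, hgood, ht, hlow, hdisj⟩ :=
    exists_hump_seq hbasis hI hZ (ε := fun n => (1 / 4) ^ n / 4) (fun n => by positivity)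
  set z := fun k => (h k).z
  set ψ := dualSeq (fun k => (h k).φ) z
  set v := fun k => Finsupp.linearCombination ℝ e (h k).l
  have hψ : ∀ k j, ψ k (z j) = if j = k then 1 else 0 :=
    dualSeq_apply (fun k => (hgood k).φ_z) hlow
  -- `ψ k` has norm at most `2 ^ k`, which the tolerance `(1/4) ^ t k / 4 ≤ (1/4) ^ k / 4` beats.
  have hterm : ∀ k, ‖ψ k‖ * ‖v k - z k‖ ≤ (1 / 2) ^ k / 4 := by
    intro k
    have hψk : ‖ψ k‖ ≤ 2 ^ k :=
      norm_dualSeq_le (fun k => (hgood k).norm_φ.le) (fun k => (hgood k).norm_z.le) k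
    have hvz : ‖v k - z k‖ ≤ (1 / 4) ^ k / 4 := by
      rw [norm_sub_rev]
      refine (hgood k).approx.le.trans ?_
      gcongr ?_ / 4
      exact pow_le_pow_of_le_one (by norm_num) (by norm_num) (ht.id_le k)
    calc ‖ψ k‖ * ‖v k - z k‖ ≤ 2 ^ k * ((1 / 4) ^ k / 4) := by gcongr
      _ = (1 / 2) ^ k / 4 := by rw [← mul_div_assoc, ← mul_pow]; norm_num
  have hs : Summable fun k => ‖ψ k‖ * ‖v k - z k‖ :=
    summable_geometric_two.div_const 4 |>.of_nonneg_of_le (fun k => by positivity) hterm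
  have hsum : ∑' k, ‖ψ k‖ * ‖v k - z k‖ ≤ 1 / 2 := by
    refine (hs.tsum_le_tsum hterm (summable_geometric_two.div_const 4)).trans_eq ?_
    rw [tsum_div_const, tsum_geometric_two]
    norm_num
  obtain ⟨T, hT, hTz⟩ := exists_perturbation_of_biorthogonal hψ hs hsum
  refine ⟨z, fun k => (h k).t, T, ht, fun k => (hgood k).mem, ?_, fun x => by linarith [hT x],
    fun k => ?_⟩
  · exact .of_pairwise_dual_eq_zero_one z (fun k => (ψ k : X →ₗ[ℝ] ℝ))
      (fun k j hkj => by simp [hψ, Ne.symm hkj]) (fun k => by simp [hψ])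
  · rw [hTz k]
    refine linearCombination_mem_spanCompl e fun n hn hnS => ?_
    simp only [mem_iUnion, mem_range, exists_prop, Finset.mem_coe] at hnS
    obtain ⟨_, ⟨j, rfl⟩, hnj⟩ := hnS
    exact Finset.disjoint_left.mp (hdisj k j) hn hnj

end Assembly

theorem not_finiteDimensional_of_linearIndependent {X : Type*} [NormedAddCommGroup X]
    [NormedSpace ℝ X] {Z : Submodule ℝ X} {W : Submodule ℝ Z} {z : ℕ → X}
    (hz : LinearIndependent ℝ z) (hzZ : ∀ k, z k ∈ Z) (hzW : ∀ k, ⟨z k, hzZ k⟩ ∈ W) :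
    ¬ FiniteDimensional ℝ W := fun _ =>
  Module.Finite.not_linearIndependent_of_infinite (fun k => (⟨⟨z k, hzZ k⟩, hzW k⟩ : W))
    (.of_comp (Z.subtype.comp W.subtype) hz)

/-- a space with a tight basis is not minimal; no subspace of it embeds
into all of its own infinite-dimensional subspaces. -/
theorem stmt3 {X : Type} [NormedAddCommGroup X] [NormedSpace ℝ X] [CompleteSpace X]
    (e : ℕ → X)
    (hbasis : (Submodule.span ℝ (Set.range e)).topologicalClosure = ⊤)
    (htight : TightBasis e)
    (Z : Submodule ℝ X) (hZc : IsClosed (Z : Set X)) (hZ : ¬ FiniteDimensional ℝ Z) :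
    ∃ W : Submodule ℝ Z, IsClosed (W : Set Z) ∧ ¬ FiniteDimensional ℝ W ∧
      ¬ Embeds ↥Z ↥W := by
  by_contra hcon
  push Not at hcon
  have : CompleteSpace Z := hZc.completeSpace_coe
  obtain ⟨I, hI, hnot⟩ := htight Z hZ
  obtain ⟨z, t, T, ht, hzZ, hz, hT, hTz⟩ := exists_operator_mapsTo_spanCompl hbasis hI hZ
  set M := spanCompl e (⋃ i ∈ range t, (I i : Set ℕ))
  set V := (Submodule.span ℝ (range z)).topologicalClosure
  have hTV : ∀ x ∈ V, T x ∈ M := fun x hx =>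
    Submodule.topologicalClosure_minimal _
      ((Submodule.map_span_le _ _ _).mpr (by rintro _ ⟨k, rfl⟩; exact hTz k))
      (Submodule.isClosed_topologicalClosure _)
      (Submodule.topologicalClosure_map T _ ⟨x, hx, rfl⟩)
  set W := V.comap Z.subtype
  have hWc : IsClosed (W : Set Z) :=
    (Submodule.isClosed_topologicalClosure _).preimage continuous_subtype_val
  have hWfin : ¬ FiniteDimensional ℝ W := not_finiteDimensional_of_linearIndependent hz hzZ
    fun k => Submodule.le_topologicalClosure _ (Submodule.subset_span ⟨k, rfl⟩)
  have hWM : Embeds W M := embeds_submodule_of_forall_mem (T.comp (Z.subtypeL.comp W.subtypeL))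
    (by norm_num : (0 : ℝ) < 1 / 2) (fun w => by simpa [div_eq_inv_mul] using hT (w : X))
    M fun w => hTV _ w.2
  exact hnot _ (infinite_range_of_injective ht.injective) ((hcon W hWc hWfin).trans hWM)
end
end

section
/- If a Banach space X is minimal, then X is locally minimal: there is a constant K such that X is K-crudely finitely representable in every infinite-dimensional subspace of X. -/
open scoped BigOperators Classical

noncomputable section

/-!
Write "`X` `K`-embeds into `W`" for `EmbedsInto K W`. Suppose no constant works for all closed
infinite-dimensional subspaces. If `S` is a `C`-embedding of `X` into `W` and `X` does not
`C K`-embed into `Z`, then `X` does not `K`-embed into `S Z ⊆ W`; so there is a decreasing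
sequence of such subspaces `W n` into which `X` does not `n A ^ (n * n)`-embed. Choose `n`
independent vectors in each `W n` and let `V` be the closed span of all of them: it is
infinite-dimensional, so `X` `c`-embeds into `V` for some `c`, and for `N ≥ c` the space `V` lies
in `W N` plus the span of at most `N * N` vectors. Each of these vectors is peeled off at the cost
of a factor `A`, which gives an `N A ^ (N * N)`-embedding of `X` into `W N`.

Here `A` is a constant such that `X` `A`-embeds into every closed hyperplane. It exists because
`X` embeds into some proper closed subspace, hence into a closed hyperplane, by some `T₀`; to land
in another hyperplane `ker g`, keep `T₀` on `ker (g ∘ T₀)` and send a complementary direction to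
a unit vector of `ker g` at distance `1 / 2` from `T₀ (ker (g ∘ T₀))` (Riesz's lemma).
-/

section

variable {𝕜 E F : Type*} [NontriviallyNormedField 𝕜] [NormedAddCommGroup E] [NormedSpace 𝕜 E]
  [NormedAddCommGroup F] [NormedSpace 𝕜 F]

theorem antilipschitzWith_one_of_le_norm {S : E →L[𝕜] F} (hS : ∀ x, ‖x‖ ≤ ‖S x‖) :
    AntilipschitzWith 1 S :=
  AddMonoidHomClass.antilipschitz_of_bound S fun x => by simpa using hS x

theorem isClosed_map_of_le_norm [CompleteSpace E] {S : E →L[𝕜] F} (hS : ∀ x, ‖x‖ ≤ ‖S x‖)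
    {Z : Submodule 𝕜 E} (hZ : IsClosed (Z : Set E)) : IsClosed (Z.map (S : E →ₗ[𝕜] F) : Set F) := by
  have : CompleteSpace Z := hZ.completeSpace_coe
  convert (antilipschitzWith_one_of_le_norm (S := S.comp Z.subtypeL) fun x => hS x).isClosed_range
    (S.comp Z.subtypeL).uniformContinuous using 1
  ext y
  simp

theorem not_finiteDimensional_map_of_le_norm {S : E →L[𝕜] F} (hS : ∀ x, ‖x‖ ≤ ‖S x‖)
    {Z : Submodule 𝕜 E} (hZ : ¬ FiniteDimensional 𝕜 Z) :
    ¬ FiniteDimensional 𝕜 (Z.map (S : E →ₗ[𝕜] F)) := fun _ =>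
  hZ ((Submodule.equivMapOfInjective _ (antilipschitzWith_one_of_le_norm hS).injective Z).symm
    |>.finiteDimensional)

end

section Embeddings

variable {X : Type*} [NormedAddCommGroup X] [NormedSpace ℝ X]

def EmbedsInto (K : ℝ) (W : Submodule ℝ X) : Prop :=
  ∃ T : X →L[ℝ] X, (∀ x, T x ∈ W) ∧ ∀ x, ‖x‖ ≤ ‖T x‖ ∧ ‖T x‖ ≤ K * ‖x‖

theorem EmbedsInto.mono {K : ℝ} {W W' : Submodule ℝ X} (h : EmbedsInto K W) (hW : W ≤ W') :
    EmbedsInto K W' :=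
  let ⟨T, hTW, hT⟩ := h
  ⟨T, fun x => hW (hTW x), hT⟩

theorem EmbedsInto.mono_const {K K' : ℝ} {W : Submodule ℝ X} (h : EmbedsInto K W) (hK : K ≤ K') :
    EmbedsInto K' W :=
  let ⟨T, hTW, hT⟩ := h
  ⟨T, hTW, fun x => ⟨(hT x).1, (hT x).2.trans (by gcongr)⟩⟩

theorem embedsInto_top : EmbedsInto 1 (⊤ : Submodule ℝ X) :=
  ⟨ContinuousLinearMap.id ℝ X, fun _ => trivial, fun x => by simp⟩

theorem embedsInto_of_bounds {W : Submodule ℝ X} {T : X →L[ℝ] X} {a b : ℝ} (ha : 0 ≤ a)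
    (hTW : ∀ x, T x ∈ W) (hlow : ∀ x, ‖x‖ ≤ a * ‖T x‖) (hup : ∀ x, ‖T x‖ ≤ b * ‖x‖) :
    EmbedsInto (a * b) W := by
  refine ⟨a • T, fun x => W.smul_mem a (hTW x), fun x => ?_⟩
  rw [smul_apply, norm_smul, Real.norm_of_nonneg ha, mul_assoc]
  exact ⟨hlow x, by gcongr; exact hup x⟩

theorem exists_embedsInto_of_embeds {Z : Submodule ℝ X} (h : Embeds X Z) :
    ∃ C, 0 ≤ C ∧ EmbedsInto C Z := by
  obtain ⟨T, c, hc, hT⟩ := h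
  refine ⟨c⁻¹ * ‖Z.subtypeL.comp T‖, by positivity,
    embedsInto_of_bounds (inv_nonneg.2 hc.le) (fun x => (T x).2) (fun x => ?_)
      (Z.subtypeL.comp T).le_opNorm⟩
  rw [le_inv_mul_iff₀ hc]
  exact hT x

theorem EmbedsInto.embedsWithConst {K : ℝ} {Z : Submodule ℝ X} (h : EmbedsInto K Z)
    (F : Submodule ℝ X) : EmbedsWithConst K F Z := by
  obtain ⟨T, hTZ, hT⟩ := h
  exact ⟨(T.comp F.subtypeL).codRestrict Z fun y => hTZ y, fun y => hT y⟩

theorem EmbedsInto.of_map {S : X →L[ℝ] X} {C K : ℝ} (hC : 0 ≤ C)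
    (hS : ∀ x, ‖x‖ ≤ ‖S x‖ ∧ ‖S x‖ ≤ C * ‖x‖) {Z : Submodule ℝ X}
    (h : EmbedsInto K (Z.map (S : X →ₗ[ℝ] X))) : EmbedsInto (C * K) Z := by
  obtain ⟨T, hTZ, hT⟩ := h
  have hinj : Function.Injective S := (antilipschitzWith_one_of_le_norm fun x => (hS x).1).injective
  let e := LinearEquiv.ofInjective (S : X →ₗ[ℝ] X) hinj
  have hrange : ∀ x, T x ∈ LinearMap.range (S : X →ₗ[ℝ] X) := fun x =>
    let ⟨z, _, hz⟩ := hTZ x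
    ⟨z, hz⟩
  let R : X →ₗ[ℝ] X := e.symm.toLinearMap.comp ((T : X →ₗ[ℝ] X).codRestrict _ hrange)
  have hSR : ∀ x, S (R x) = T x := fun x =>
    congrArg Subtype.val (e.apply_symm_apply ⟨T x, hrange x⟩)
  have hRT : ∀ x, ‖R x‖ ≤ K * ‖x‖ := fun x =>
    calc ‖R x‖ ≤ ‖S (R x)‖ := (hS _).1
      _ = ‖T x‖ := by rw [hSR]
      _ ≤ K * ‖x‖ := (hT x).2
  refine embedsInto_of_bounds (T := R.mkContinuous K hRT) hC (fun x => ?_) (fun x => ?_) hRT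
  · obtain ⟨z, hz, hzT⟩ := hTZ x
    show R x ∈ Z
    rwa [← hinj (hzT.trans (hSR x).symm)]
  · calc ‖x‖ ≤ ‖T x‖ := (hT x).1
      _ = ‖S (R x)‖ := by rw [hSR]
      _ ≤ C * ‖R x‖ := (hS _).2

end Embeddings

section Hyperplanes

theorem mul_norm_le_norm_add_smul {𝕜 E : Type*} [NormedField 𝕜] [SeminormedAddCommGroup E]
    [NormedSpace 𝕜 E] {M : Submodule 𝕜 E} {w : E} {r : ℝ} (hw : ∀ y ∈ M, r ≤ ‖w - y‖) {m : E}
    (hm : m ∈ M) (t : 𝕜) : r * ‖t‖ ≤ ‖m + t • w‖ := by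
  rcases eq_or_ne t 0 with rfl | ht
  · simp
  have : m + t • w = t • (w - (-t⁻¹) • m) := by
    rw [smul_sub, smul_smul, mul_neg, mul_inv_cancel₀ ht, neg_one_smul, sub_neg_eq_add, add_comm]
  rw [this, norm_smul, mul_comm]
  gcongr
  exact hw _ (M.smul_mem _ hm)

theorem exists_mem_norm_eq_one_forall_le_norm_sub {𝕜 E : Type*} [RCLike 𝕜]
    [NormedAddCommGroup E] [NormedSpace 𝕜 E] {M N : Submodule 𝕜 E} (hM : IsClosed (M : Set E))
    (hMN : M ≤ N) (hNM : ¬ N ≤ M) {r : ℝ} (hr : r < 1) :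
    ∃ w ∈ N, ‖w‖ = 1 ∧ ∀ y ∈ M, r ≤ ‖w - y‖ := by
  obtain ⟨v, hvN, hvM⟩ := SetLike.not_le_iff_exists.1 hNM
  obtain ⟨w, -, hw1, hw⟩ := riesz_lemma_of_lt_one (F := M.comap N.subtype)
    (hM.preimage continuous_subtype_val) ⟨⟨v, hvN⟩, hvM⟩ hr
  exact ⟨w, w.2, hw1, fun y hy => hw ⟨y, hMN hy⟩ hy⟩

theorem exists_apply_eq_one_norm_le_two {E : Type*} [NormedAddCommGroup E] [NormedSpace ℝ E]
    {ψ : E →L[ℝ] ℝ} (hψ : ‖ψ‖ = 1) : ∃ u, ψ u = 1 ∧ ‖u‖ ≤ 2 := by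
  obtain ⟨x, hx1, hψx⟩ := ψ.exists_lt_apply_of_lt_opNorm (r := 1 / 2) (by rw [hψ]; norm_num)
  have hψx0 : ψ x ≠ 0 := norm_pos_iff.1 (lt_trans (by norm_num) hψx)
  refine ⟨(ψ x)⁻¹ • x, by simp [hψx0], ?_⟩
  rw [norm_smul, norm_inv, inv_mul_le_iff₀ (norm_pos_iff.2 hψx0)]
  linarith

/-- Correcting `v` along `T x` lands in `ker g` without changing `f v ≠ 0`. -/
theorem LinearMap.not_ker_le_range {K V : Type*} [Field K] [AddCommGroup V] [Module K V]
    {f g : V →ₗ[K] K} {T : V →ₗ[K] V} (hf : ∃ v, f v ≠ 0) (hfT : ∀ x, f (T x) = 0)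
    (hgT : ∃ x, g (T x) ≠ 0) : ¬ LinearMap.ker g ≤ LinearMap.range T := by
  intro hle
  obtain ⟨v, hv⟩ := hf
  obtain ⟨x, hx⟩ := hgT
  obtain ⟨k, hk⟩ := hle (x := v - (g v / g (T x)) • T x) (by simp [hx])
  have hfk : f (T k) = f v := by simp [hk, hfT]
  exact hv (hfk.symm.trans (hfT k))

variable {X : Type*} [NormedAddCommGroup X] [NormedSpace ℝ X]

theorem norm_le_and_le_of_transversal {T₀ : X →L[ℝ] X} {c : ℝ} (hc : 0 ≤ c)
    (hT₀ : ∀ x, ‖x‖ ≤ ‖T₀ x‖ ∧ ‖T₀ x‖ ≤ c * ‖x‖) {ψ : X →L[ℝ] ℝ} (hψ : ‖ψ‖ ≤ 1) {u w : X}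
    (hu : ψ u = 1) (hu2 : ‖u‖ ≤ 2) (hw : ‖w‖ = 1)
    (hsep : ∀ k, ψ k = 0 → ∀ t : ℝ, 1 / 2 * ‖t‖ ≤ ‖T₀ k + t • w‖) (x : X) :
    ‖x‖ ≤ 7 * ‖T₀ (x - ψ x • u) + ψ x • w‖ ∧
      ‖T₀ (x - ψ x • u) + ψ x • w‖ ≤ (3 * c + 1) * ‖x‖ := by
  set k := x - ψ x • u
  set t := ψ x
  have hk : ψ k = 0 := by simp [k, hu]
  have ht : ‖t‖ ≤ ‖x‖ := (ψ.le_opNorm x).trans (mul_le_of_le_one_left (norm_nonneg x) hψ)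
  have htu : ‖t • u‖ ≤ 2 * ‖t‖ := by rw [norm_smul, mul_comm]; gcongr
  have hkx : ‖k‖ ≤ 3 * ‖x‖ := by linarith [norm_sub_le x (t • u)]
  have hxk : ‖x‖ ≤ ‖k‖ + 2 * ‖t‖ := by
    have := norm_add_le k (t • u)
    rw [sub_add_cancel] at this
    linarith
  have htw : ‖t • w‖ = ‖t‖ := by rw [norm_smul, hw, mul_one]
  have hlow₁ := hsep k hk t
  have hlow₂ : ‖T₀ k‖ ≤ ‖T₀ k + t • w‖ + ‖t‖ := by
    simpa [htw] using norm_le_add_norm_add (T₀ k) (t • w)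
  have hck : c * ‖k‖ ≤ c * (3 * ‖x‖) := by gcongr
  constructor
  · linarith [(hT₀ k).1]
  · linarith [norm_add_le (T₀ k) (t • w), (hT₀ k).2]

theorem EmbedsInto.ker_of_ker [CompleteSpace X] {c : ℝ} (hc : 0 ≤ c) {f : X →L[ℝ] ℝ}
    (hf : f ≠ 0) (h : EmbedsInto c (LinearMap.ker (f : X →ₗ[ℝ] ℝ))) (g : X →L[ℝ] ℝ) :
    EmbedsInto (7 * (3 * c + 1)) (LinearMap.ker (g : X →ₗ[ℝ] ℝ)) := by
  obtain ⟨T₀, hT₀f, hT₀⟩ := h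
  set φ := g.comp T₀
  by_cases hφ : φ = 0
  · refine EmbedsInto.mono_const ⟨T₀, fun x => ?_, hT₀⟩ (by linarith)
    simpa [φ] using congr($hφ x)
  set ψ := ‖φ‖⁻¹ • φ
  have hψ : ‖ψ‖ = 1 := norm_smul_inv_norm hφ
  have hφψ : ∀ x, ψ x = 0 → φ x = 0 := fun x hx => by
    simpa [ψ, norm_ne_zero_iff.2 hφ] using hx
  set M := (LinearMap.ker (ψ : X →ₗ[ℝ] ℝ)).map (T₀ : X →ₗ[ℝ] X)
  have hMg : M ≤ LinearMap.ker (g : X →ₗ[ℝ] ℝ) := by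
    rintro _ ⟨k, hk, rfl⟩
    exact hφψ k hk
  have hgM : ¬ LinearMap.ker (g : X →ₗ[ℝ] ℝ) ≤ M := fun hle =>
    LinearMap.not_ker_le_range (by simpa [DFunLike.ne_iff] using hf) hT₀f
      (by simpa [DFunLike.ne_iff, φ] using hφ) (hle.trans LinearMap.map_le_range)
  have hMc : IsClosed (M : Set X) :=
    isClosed_map_of_le_norm (fun x => (hT₀ x).1) (ψ.isClosed_ker)
  obtain ⟨w, hwg, hw1, hwM⟩ :=
    exists_mem_norm_eq_one_forall_le_norm_sub hMc hMg hgM (r := 1 / 2) (by norm_num)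
  obtain ⟨u, hu, hu2⟩ := exists_apply_eq_one_norm_le_two hψ
  have hbound := norm_le_and_le_of_transversal hc hT₀ hψ.le hu hu2 hw1
    fun k hk t => mul_norm_le_norm_add_smul hwM ⟨k, hk, rfl⟩ t
  let E : X →L[ℝ] X := T₀.comp (ContinuousLinearMap.id ℝ X - ψ.smulRight u) + ψ.smulRight w
  have hE : ∀ x, E x = T₀ (x - ψ x • u) + ψ x • w := fun x => by simp [E]
  refine embedsInto_of_bounds (T := E) (by norm_num) (fun x => ?_)
    (fun x => hE x ▸ (hbound x).1) (fun x => hE x ▸ (hbound x).2)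
  have hk : ψ (x - ψ x • u) = 0 := by simp [hu]
  have : g (T₀ (x - ψ x • u)) = 0 := hφψ _ hk
  simp only [LinearMap.mem_ker, ContinuousLinearMap.coe_coe, hE, map_add, map_smul, this,
    show g w = 0 from hwg, smul_zero, add_zero]

end Hyperplanes

section Peeling

theorem exists_eq_one_le_ker {𝕜 E : Type*} [RCLike 𝕜] [NormedAddCommGroup E] [NormedSpace 𝕜 E]
    {P : Submodule 𝕜 E} (hP : IsClosed (P : Set E)) {v : E} (hv : v ∉ P) :
    ∃ f : E →L[𝕜] 𝕜, f v = 1 ∧ P ≤ LinearMap.ker (f : E →ₗ[𝕜] 𝕜) := by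
  have : IsClosed (P : Set E) := hP
  obtain ⟨f, hf⟩ := SeparatingDual.exists_eq_one (R := 𝕜) (x := P.mkQ v)
    (by simpa [Submodule.Quotient.mk_eq_zero] using hv)
  exact ⟨f.comp P.mkQL, hf, fun p hp => by simp [(Submodule.Quotient.mk_eq_zero P).2 hp]⟩

variable {X : Type*} [NormedAddCommGroup X] [NormedSpace ℝ X]

theorem EmbedsInto.of_sup_span_singleton {A K : ℝ} (hA : 1 ≤ A) (hK : 0 ≤ K)
    (hker : ∀ g : X →L[ℝ] ℝ, EmbedsInto A (LinearMap.ker (g : X →ₗ[ℝ] ℝ)))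
    {P : Submodule ℝ X} (hP : IsClosed (P : Set X)) {v : X}
    (h : EmbedsInto K (P ⊔ Submodule.span ℝ {v})) : EmbedsInto (K * A) P := by
  by_cases hv : v ∈ P
  · rw [sup_eq_left.2 ((Submodule.span_singleton_le_iff_mem _ _).2 hv)] at h
    exact h.mono_const (le_mul_of_one_le_right hK hA)
  obtain ⟨f, hfv, hPf⟩ := exists_eq_one_le_ker hP hv
  obtain ⟨T, hTP, hT⟩ := h
  obtain ⟨E, hEf, hE⟩ := hker (f.comp T)
  refine ⟨T.comp E, fun x => ?_, fun x => ⟨(hE x).1.trans (hT _).1, ?_⟩⟩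
  · obtain ⟨p, hp, y, hy, hpy⟩ := Submodule.mem_sup.1 (hTP (E x))
    obtain ⟨t, rfl⟩ := Submodule.mem_span_singleton.1 hy
    have hfp : f p = 0 := hPf hp
    have ht : t = 0 := by
      simpa [← hpy, hfp, hfv] using (hEf x : f (T (E x)) = 0)
    simpa [← hpy, ht] using hp
  · calc ‖T (E x)‖ ≤ K * ‖E x‖ := (hT _).2
      _ ≤ K * (A * ‖x‖) := by gcongr; exact (hE x).2
      _ = K * A * ‖x‖ := by ring

theorem EmbedsInto.of_sup_span_finset {A : ℝ} (hA : 1 ≤ A)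
    (hker : ∀ g : X →L[ℝ] ℝ, EmbedsInto A (LinearMap.ker (g : X →ₗ[ℝ] ℝ)))
    {P : Submodule ℝ X} (hP : IsClosed (P : Set X)) (s : Finset X) {K : ℝ} (hK : 0 ≤ K)
    (h : EmbedsInto K (P ⊔ Submodule.span ℝ s)) : EmbedsInto (K * A ^ s.card) P := by
  induction s using Finset.induction_on generalizing K with
  | empty => simpa using h
  | insert a s ha ih =>
    rw [Finset.coe_insert, Submodule.span_insert, sup_comm (Submodule.span ℝ {a}), ← sup_assoc] at h
    have hPs := Submodule.isClosed_sup_finiteDimensional P (Submodule.span ℝ (s : Set X)) hP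
    have := ih (by positivity) (h.of_sup_span_singleton hA hK hker hPs)
    rwa [Finset.card_insert_of_notMem ha, pow_succ', ← mul_assoc]

end Peeling

theorem exists_antitone_of_forall_exists_le {α : Type*} [Preorder α] [Nonempty α]
    {p : ℕ → α → Prop} (h : ∀ n a, ∃ b ≤ a, p n b) : ∃ f : ℕ → α, Antitone f ∧ ∀ n, p n (f n) := by
  choose g hg_le hg using h
  obtain ⟨a₀⟩ := ‹Nonempty α›
  let f : ℕ → α := fun n => Nat.rec (g 0 a₀) (fun n b => g (n + 1) b) n
  refine ⟨f, antitone_nat_of_succ_le fun n => hg_le _ _, fun n => ?_⟩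
  cases n <;> exact hg _ _

theorem Submodule.not_finiteDimensional_iff_forall_exists_finset {K V : Type*} [Field K]
    [AddCommGroup V] [Module K V] (W : Submodule K V) :
    ¬ FiniteDimensional K W ↔
      ∀ n : ℕ, ∃ s : Finset V, (s : Set V) ⊆ W ∧ s.card = n ∧ LinearIndepOn K id (s : Set V) := by
  rw [FiniteDimensional, ← Module.rank_lt_aleph0_iff, not_lt, Cardinal.aleph0_le]
  refine forall_congr' fun n => ⟨fun hn => ?_, fun ⟨s, hsW, hs, hli⟩ => ?_⟩
  · obtain ⟨s, hs, hli⟩ := exists_finset_linearIndependent_of_le_rank hn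
    refine ⟨s.map (Function.Embedding.subtype _), ?_, by simp [hs], ?_⟩
    · simpa only [Finset.coe_map] using Set.image_subset_iff.2 fun x _ => x.2
    simpa using hli.image (f := W.subtype) (by simp)
  · calc (n : Cardinal) = Module.rank K (span K (s : Set V)) := by
          rw [rank_span_set hli, Finset.coe_sort_coe, Cardinal.mk_coe_finset, hs]
      _ ≤ Module.rank K W := Submodule.rank_mono (span_le.2 hsW)

theorem Submodule.topologicalClosure_span_iUnion_le {𝕜 E : Type*} [NontriviallyNormedField 𝕜]
    [CompleteSpace 𝕜] [AddCommGroup E] [TopologicalSpace E] [IsTopologicalAddGroup E]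
    [Module 𝕜 E] [ContinuousSMul 𝕜 E] (s : ℕ → Finset E) (N : ℕ) :
    (span 𝕜 (⋃ n, (s n : Set E))).topologicalClosure ≤
      (span 𝕜 (⋃ n ≥ N, (s n : Set E))).topologicalClosure ⊔
        span 𝕜 ((Finset.range N).biUnion s : Set E) := by
  refine topologicalClosure_minimal _ (span_le.2 ?_)
    (isClosed_sup_finiteDimensional _ _ (isClosed_topologicalClosure _))
  simp only [Set.iUnion_subset_iff]
  intro n y hy
  rcases lt_or_ge n N with hn | hn
  · exact mem_sup_right (subset_span (by simpa using ⟨n, hn, hy⟩))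
  · exact mem_sup_left (le_topologicalClosure _ (subset_span (Set.mem_biUnion hn hy)))

section Uniform

open Submodule

variable {X : Type*} [NormedAddCommGroup X] [NormedSpace ℝ X] [CompleteSpace X]

theorem forall_embedsInto_ker_of_embedsInto {C : ℝ} (hC : 0 ≤ C) {Z : Submodule ℝ X}
    (hZ : IsClosed (Z : Set X)) (hZtop : Z ≠ ⊤) (h : EmbedsInto C Z) (g : X →L[ℝ] ℝ) :
    EmbedsInto (7 * (3 * C + 1)) (LinearMap.ker (g : X →ₗ[ℝ] ℝ)) := by
  obtain ⟨v, -, hv⟩ := SetLike.exists_of_lt hZtop.lt_top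
  obtain ⟨f, hfv, hZf⟩ := exists_eq_one_le_ker hZ hv
  have hf : f ≠ 0 := fun hf => by simp [hf] at hfv
  exact (h.mono hZf).ker_of_ker hC hf g

theorem exists_le_not_embedsInto {C K : ℝ} (hC : 0 ≤ C) {W : Submodule ℝ X} (hW : EmbedsInto C W)
    {Z : Submodule ℝ X} (hZ : IsClosed (Z : Set X)) (hZfin : ¬ FiniteDimensional ℝ Z)
    (hZK : ¬ EmbedsInto (C * K) Z) :
    ∃ W' ≤ W, IsClosed (W' : Set X) ∧ ¬ FiniteDimensional ℝ W' ∧ ¬ EmbedsInto K W' := by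
  obtain ⟨S, hSW, hS⟩ := hW
  refine ⟨Z.map (S : X →ₗ[ℝ] X), ?_, isClosed_map_of_le_norm (fun x => (hS x).1) hZ,
    not_finiteDimensional_map_of_le_norm (fun x => (hS x).1) hZfin,
    fun h => hZK (h.of_map hC hS)⟩
  rintro _ ⟨z, -, rfl⟩
  exact hSW z

theorem exists_antitone_not_embedsInto
    (hgood : ∀ W : Submodule ℝ X, IsClosed (W : Set X) → ¬ FiniteDimensional ℝ W →
      ∃ C, 0 ≤ C ∧ EmbedsInto C W)
    (hbad : ∀ K, ∃ Z : Submodule ℝ X, IsClosed (Z : Set X) ∧ ¬ FiniteDimensional ℝ Z ∧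
      ¬ EmbedsInto K Z) (a : ℕ → ℝ) :
    ∃ W : ℕ → Submodule ℝ X, Antitone W ∧
      ∀ n, IsClosed (W n : Set X) ∧ ¬ FiniteDimensional ℝ (W n) ∧ ¬ EmbedsInto (a n) (W n) := by
  let InfDimClosed := {W : Submodule ℝ X // IsClosed (W : Set X) ∧ ¬ FiniteDimensional ℝ W}
  have : Nonempty InfDimClosed := let ⟨Z, hZ, hZfin, _⟩ := hbad 0; ⟨⟨Z, hZ, hZfin⟩⟩
  obtain ⟨W, hWanti, hWa⟩ := exists_antitone_of_forall_exists_le (α := InfDimClosed)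
      (p := fun n W => ¬ EmbedsInto (a n) W.1) (by
    rintro n ⟨W, hW, hWfin⟩
    obtain ⟨C, hC, hCW⟩ := hgood W hW hWfin
    obtain ⟨Z, hZ, hZfin, hZa⟩ := hbad (C * a n)
    obtain ⟨W', hW'W, hW', hW'fin, hW'a⟩ := exists_le_not_embedsInto hC hCW hZ hZfin hZa
    exact ⟨⟨W', hW', hW'fin⟩, hW'W, hW'a⟩)
  exact ⟨fun n => (W n).1, fun _ _ hmn => hWanti hmn, fun n => ⟨(W n).2.1, (W n).2.2, hWa n⟩⟩

/-- Casazza's observation. -/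
theorem exists_forall_embedsInto_of_forall_embeds
    (hmin : ∀ Z : Submodule ℝ X, IsClosed (Z : Set X) → ¬ FiniteDimensional ℝ Z → Embeds X Z) :
    ∃ K, ∀ Z : Submodule ℝ X, IsClosed (Z : Set X) → ¬ FiniteDimensional ℝ Z → EmbedsInto K Z := by
  by_contra! hbad
  have hgood Z hZ hZfin := exists_embedsInto_of_embeds (hmin Z hZ hZfin)
  obtain ⟨A, hA, hker⟩ : ∃ A, 1 ≤ A ∧ ∀ g : X →L[ℝ] ℝ,
      EmbedsInto A (LinearMap.ker (g : X →ₗ[ℝ] ℝ)) := by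
    obtain ⟨Z, hZ, hZfin, hZ1⟩ := hbad 1
    obtain ⟨C, hC, hCZ⟩ := hgood Z hZ hZfin
    have hZtop : Z ≠ ⊤ := by rintro rfl; exact hZ1 embedsInto_top
    exact ⟨_, by linarith, forall_embedsInto_ker_of_embedsInto hC hZ hZtop hCZ⟩
  obtain ⟨W, hWanti, hW⟩ := exists_antitone_not_embedsInto hgood hbad fun n => n * A ^ (n * n)
  choose s hsW hcard hli using fun n =>
    (W n).not_finiteDimensional_iff_forall_exists_finset.1 (hW n).2.1 n
  -- the diagonal subspace: up to finitely many vectors it lies in each `W N`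
  let V := (span ℝ (⋃ n, (s n : Set X))).topologicalClosure
  have hsV n : (s n : Set X) ⊆ V := (Set.subset_iUnion (fun n => (s n : Set X)) n).trans
    (subset_span.trans (le_topologicalClosure _))
  have hVfin : ¬ FiniteDimensional ℝ V :=
    V.not_finiteDimensional_iff_forall_exists_finset.2 fun n => ⟨s n, hsV n, hcard n, hli n⟩
  obtain ⟨c, hc, hcV⟩ := hgood V (isClosed_topologicalClosure _) hVfin
  obtain ⟨N, hN⟩ := exists_nat_ge c
  have htail : (span ℝ (⋃ n ≥ N, (s n : Set X))).topologicalClosure ≤ W N :=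
    topologicalClosure_minimal _
      (span_le.2 (Set.iUnion₂_subset fun n hn => (hsW n).trans (hWanti hn))) (hW N).1
  have hhead : ((Finset.range N).biUnion s).card ≤ N * N :=
    Finset.card_biUnion_le.trans <| (Finset.sum_le_card_nsmul _ _ N fun n hn => by
      simpa [hcard] using (Finset.mem_range.1 hn).le).trans (by simp)
  have hWN := ((hcV.mono (topologicalClosure_span_iUnion_le s N)).of_sup_span_finset hA hker
    (isClosed_topologicalClosure _) _ hc).mono htail
  exact (hW N).2.2 <| hWN.mono_const <|
    mul_le_mul hN (pow_le_pow_right₀ hA hhead) (by positivity) (by positivity)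

end Uniform

/-- a minimal Banach space is locally minimal. -/
theorem stmt6 {X : Type} [NormedAddCommGroup X] [NormedSpace ℝ X] [CompleteSpace X]
    (hmin : ∀ Z : Submodule ℝ X, IsClosed (Z : Set X) → ¬ FiniteDimensional ℝ Z →
      Embeds X ↥Z) :
    ∃ K : ℝ, 1 ≤ K ∧ ∀ Z : Submodule ℝ X, IsClosed (Z : Set X) →
      ¬ FiniteDimensional ℝ Z →
      ∀ F : Submodule ℝ X, FiniteDimensional ℝ F → EmbedsWithConst K ↥F ↥Z := by
  obtain ⟨K, hK⟩ := exists_forall_embedsInto_of_forall_embeds hmin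
  exact ⟨max K 1, le_max_right K 1, fun Z hZ hZfin F _ =>
    ((hK Z hZ hZfin).mono_const (le_max_left K 1)).embedsWithConst F⟩
end
end

section
/- Every hereditarily indecomposable Banach space is uniformly inhomogeneous; in fact, the definition of uniform inhomogeneity is witnessed with n = 2: for all M ≥ 1 there exist, in any four infinite-dimensional subspaces Y₁, Y₂, Y₃, Y₄ of X, unit vectors yᵢ ∈ Yᵢ such that (y₁, y₂) is not M-equivalent to (y₃, y₄). -/
open scoped BigOperators Classical

noncomputable section

/-- Two finite sequences are `M`-equivalent: the map sending one to the other extends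
to an isomorphism `T` of the spans with `‖T‖·‖T⁻¹‖ ≤ M`. -/
def SeqEquiv {X : Type} [NormedAddCommGroup X] [NormedSpace ℝ X]
    {n : ℕ} (M : ℝ) (y z : Fin n → X) : Prop :=
  ∃ c : ℝ, 0 < c ∧ ∀ a : Fin n → ℝ,
    c * ‖∑ i, a i • y i‖ ≤ ‖∑ i, a i • z i‖ ∧
    ‖∑ i, a i • z i‖ ≤ M * c * ‖∑ i, a i • y i‖

/-- `X` is hereditarily indecomposable: no infinite-dimensional closed subspace is a
topological direct sum of two infinite-dimensional closed subspaces. -/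
def IsHI (X : Type) [NormedAddCommGroup X] [NormedSpace ℝ X] : Prop :=
  ¬ ∃ W₁ W₂ : Submodule ℝ X, IsClosed (W₁ : Set X) ∧ IsClosed (W₂ : Set X) ∧
    ¬ FiniteDimensional ℝ W₁ ∧ ¬ FiniteDimensional ℝ W₂ ∧ W₁ ⊓ W₂ = ⊥ ∧
    IsClosed ((W₁ ⊔ W₂ : Submodule ℝ X) : Set X)


/-- Auxiliary norm estimate: if the normalizations of `a` and `b` are `ε`-separated,
then `‖a‖ * ε ≤ 2 * ‖a - b‖`. -/
lemma aux_est {X : Type} [NormedAddCommGroup X] [NormedSpace ℝ X]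
    (a b : X) (ha0 : a ≠ 0) (hb0 : b ≠ 0) (ε : ℝ)
    (hεuv : ε ≤ ‖‖a‖⁻¹ • a - ‖b‖⁻¹ • b‖) : ‖a‖ * ε ≤ 2 * ‖a - b‖ := by
  set u := ‖a‖⁻¹ • a with hu
  set v := ‖b‖⁻¹ • b with hv
  have hna : ‖a‖ ≠ 0 := norm_ne_zero_iff.mpr ha0
  have hnb : ‖b‖ ≠ 0 := norm_ne_zero_iff.mpr hb0
  have hau : ‖a‖ • u = a := by rw [hu, smul_smul, mul_inv_cancel₀ hna, one_smul]
  have hbv : ‖b‖ • v = b := by rw [hv, smul_smul, mul_inv_cancel₀ hnb, one_smul]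
  have hv1 : ‖v‖ = 1 := by rw [hv, norm_smul, norm_inv, norm_norm, inv_mul_cancel₀ hnb]
  have e1 : ‖a‖ • (u - v) = (a - b) + (‖b‖ - ‖a‖) • v := by
    rw [smul_sub, hau, sub_smul, hbv]; abel
  have h2 : ‖a‖ * ‖u - v‖ ≤ ‖a - b‖ + |‖b‖ - ‖a‖| := by
    calc ‖a‖ * ‖u - v‖ = ‖‖a‖ • (u - v)‖ := by rw [norm_smul, norm_norm]
    _ = ‖(a - b) + (‖b‖ - ‖a‖) • v‖ := by rw [e1]
    _ ≤ ‖a - b‖ + ‖(‖b‖ - ‖a‖) • v‖ := norm_add_le _ _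
    _ = ‖a - b‖ + |‖b‖ - ‖a‖| := by rw [norm_smul, hv1, Real.norm_eq_abs, mul_one]
  have habs : |‖b‖ - ‖a‖| ≤ ‖a - b‖ := by
    rw [abs_sub_comm]; exact abs_norm_sub_norm_le a b
  have h3 : ‖a‖ * ε ≤ ‖a‖ * ‖u - v‖ :=
    mul_le_mul_of_nonneg_left hεuv (norm_nonneg a)
  linarith

/-- Key HI property: unit spheres of any two infinite-dimensional closed subspaces
come `ε`-close. -/
lemma hi_close {X : Type} [NormedAddCommGroup X] [NormedSpace ℝ X] [CompleteSpace X]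
    (hHI : IsHI X) (W₁ W₂ : Submodule ℝ X) (h₁c : IsClosed (W₁ : Set X))
    (h₂c : IsClosed (W₂ : Set X)) (h₁ : ¬ FiniteDimensional ℝ W₁)
    (h₂ : ¬ FiniteDimensional ℝ W₂) (ε : ℝ) (hε : 0 < ε) (hε1 : ε ≤ 1) :
    ∃ w₁ ∈ W₁, ∃ w₂ ∈ W₂, ‖w₁‖ = 1 ∧ ‖w₂‖ = 1 ∧ ‖w₁ - w₂‖ < ε := by
  by_contra hcon
  push_neg at hcon
  -- separation of unit vectors
  have hsep0 : ∀ w₁ ∈ W₁, ∀ w₂ ∈ W₂, ‖w₁‖ = 1 → ‖w₂‖ = 1 → ε ≤ ‖w₁ - w₂‖ := by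
    intro w₁ hw₁ w₂ hw₂ h1 h2
    exact hcon w₁ hw₁ w₂ hw₂ h1 h2
  have sep : ∀ a ∈ W₁, ∀ b ∈ W₂, ε * (‖a‖ + ‖b‖) ≤ 4 * ‖a - b‖ := by
    intro a ha b hb
    rcases eq_or_ne a 0 with rfl | ha0
    · simp only [norm_zero, zero_add, zero_sub, norm_neg]
      nlinarith [norm_nonneg b]
    rcases eq_or_ne b 0 with rfl | hb0
    · simp only [norm_zero, add_zero, sub_zero]
      nlinarith [norm_nonneg a]
    have hna : ‖a‖ ≠ 0 := norm_ne_zero_iff.mpr ha0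
    have hnb : ‖b‖ ≠ 0 := norm_ne_zero_iff.mpr hb0
    have hu1 : ‖‖a‖⁻¹ • a‖ = 1 := by rw [norm_smul, norm_inv, norm_norm, inv_mul_cancel₀ hna]
    have hv1 : ‖‖b‖⁻¹ • b‖ = 1 := by rw [norm_smul, norm_inv, norm_norm, inv_mul_cancel₀ hnb]
    have hεuv : ε ≤ ‖‖a‖⁻¹ • a - ‖b‖⁻¹ • b‖ :=
      hsep0 _ (W₁.smul_mem _ ha) _ (W₂.smul_mem _ hb) hu1 hv1
    have hεvu : ε ≤ ‖‖b‖⁻¹ • b - ‖a‖⁻¹ • a‖ := by rwa [norm_sub_rev]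
    have k1 := aux_est a b ha0 hb0 ε hεuv
    have k2 := aux_est b a hb0 ha0 ε hεvu
    rw [norm_sub_rev b a] at k2
    linarith
  have hsum : ∀ a ∈ W₁, ∀ b ∈ W₂, ε * (‖a‖ + ‖b‖) ≤ 4 * ‖a + b‖ := by
    intro a ha b hb
    have := sep a ha (-b) (W₂.neg_mem hb)
    simpa [sub_neg_eq_add] using this
  -- W₁ ⊓ W₂ = ⊥
  have hinf : W₁ ⊓ W₂ = ⊥ := by
    rw [eq_bot_iff]
    intro x hx
    rw [Submodule.mem_bot]
    by_contra hx0
    have hnx : ‖x‖ ≠ 0 := norm_ne_zero_iff.mpr hx0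
    have hx1 : ‖‖x‖⁻¹ • x‖ = 1 := by rw [norm_smul, norm_inv, norm_norm, inv_mul_cancel₀ hnx]
    have := hsep0 _ (W₁.smul_mem ‖x‖⁻¹ hx.1) _ (W₂.smul_mem ‖x‖⁻¹ hx.2) hx1 hx1
    simp at this
    linarith
  -- sup closed
  have hclosed : IsClosed ((W₁ ⊔ W₂ : Submodule ℝ X) : Set X) := by
    rw [← isSeqClosed_iff_isClosed]
    intro u x hu hux
    choose a ha b hb heq using fun n => Submodule.mem_sup.mp (hu n)
    have hcauchy : CauchySeq a := by
      rw [Metric.cauchySeq_iff]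
      intro δ hδ
      have hu' : CauchySeq u := hux.cauchySeq
      rw [Metric.cauchySeq_iff] at hu'
      obtain ⟨N, hN⟩ := hu' (ε * δ / 4) (by positivity)
      refine ⟨N, fun m hm n hn => ?_⟩
      have h1 : ε * (‖a m - a n‖ + ‖b m - b n‖) ≤ 4 * ‖(a m - a n) + (b m - b n)‖ :=
        hsum _ (W₁.sub_mem (ha m) (ha n)) _ (W₂.sub_mem (hb m) (hb n))
      have h2 : (a m - a n) + (b m - b n) = u m - u n := by
        rw [← heq m, ← heq n]; abel
      have h3 : ‖u m - u n‖ < ε * δ / 4 := by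
        rw [← dist_eq_norm]; exact hN m hm n hn
      rw [h2] at h1
      rw [dist_eq_norm]
      nlinarith [norm_nonneg (b m - b n), norm_nonneg (a m - a n)]
    obtain ⟨la, hla⟩ := cauchySeq_tendsto_of_complete hcauchy
    have hlaW : la ∈ W₁ :=
      h₁c.mem_of_tendsto hla (Filter.Eventually.of_forall ha)
    have hbt : Filter.Tendsto (fun n => u n - a n) Filter.atTop (nhds (x - la)) :=
      hux.sub hla
    have hbW : x - la ∈ W₂ := by
      refine h₂c.mem_of_tendsto hbt (Filter.Eventually.of_forall fun n => ?_)
      have : u n - a n = b n := by rw [← heq n]; abel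
      rw [this]; exact hb n
    have : x ∈ W₁ ⊔ W₂ := Submodule.mem_sup.mpr ⟨la, hlaW, x - la, hbW, by abel⟩
    exact this
  exact hHI ⟨W₁, W₂, h₁c, h₂c, h₁, h₂, hinf, hclosed⟩

/-- Lower bound on the norm of a sum of almost-equal unit vectors. -/
lemma sum_lb {X : Type} [NormedAddCommGroup X] [NormedSpace ℝ X]
    (p q : X) (hp : ‖p‖ = 1) : 2 - ‖p - q‖ ≤ ‖p + q‖ := by
  have h := norm_sub_norm_le (p + p) (p - q)
  have e : (p + p) - (p - q) = p + q := by abel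
  have hpp : ‖p + p‖ = 2 := by
    rw [← two_smul ℝ p, norm_smul, hp]
    norm_num
  rw [e, hpp] at h
  exact h

/-- every HI space is uniformly inhomogeneous, witnessed with `n = 2`. -/
theorem stmt7 {X : Type} [NormedAddCommGroup X] [NormedSpace ℝ X] [CompleteSpace X]
    (hHI : IsHI X) (M : ℝ) (hM : 1 ≤ M)
    (Y : Fin 4 → Submodule ℝ X) (hYc : ∀ i, IsClosed ((Y i : Set X)))
    (hYdim : ∀ i, ¬ FiniteDimensional ℝ (Y i)) :
    ∃ y : Fin 4 → X, (∀ i, y i ∈ Y i) ∧ (∀ i, ‖y i‖ = 1) ∧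
      ¬ SeqEquiv M ![y 0, y 1] ![y 2, y 3] := by
  have hε : (0:ℝ) < 1 / (1 + M) := by positivity
  set ε : ℝ := 1 / (1 + M) with hεdef
  have hε2 : ε ≤ 1 / 2 := by
    rw [hεdef, div_le_div_iff₀ (by linarith) (by norm_num)]
    linarith
  have hε1 : ε ≤ 1 := by linarith
  obtain ⟨y0, hy0m, y1, hy1m, hy0, hy1, h01⟩ :=
    hi_close hHI (Y 0) (Y 1) (hYc 0) (hYc 1) (hYdim 0) (hYdim 1) ε hε hε1
  obtain ⟨y2, hy2m, w, hwm, hy2, hw, h2w⟩ :=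
    hi_close hHI (Y 2) (Y 3) (hYc 2) (hYc 3) (hYdim 2) (hYdim 3) ε hε hε1
  refine ⟨![y0, y1, y2, -w], ?_, ?_, ?_⟩
  · intro i
    fin_cases i
    · exact hy0m
    · exact hy1m
    · exact hy2m
    · exact Submodule.neg_mem _ hwm
  · intro i
    fin_cases i <;> simp [hy0, hy1, hy2, hw]
  · rintro ⟨c, hc, hall⟩
    have s1 : ∀ (p q : X), ∑ i : Fin 2, (![(1:ℝ), 1]) i • (![p, q]) i = p + q := by
      intro p q; simp [Fin.sum_univ_two]
    have s2 : ∀ (p q : X), ∑ i : Fin 2, (![(1:ℝ), -1]) i • (![p, q]) i = p - q := by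
      intro p q; simp [Fin.sum_univ_two, sub_eq_add_neg]
    have H1 := hall ![1, 1]
    have H2 := hall ![1, -1]
    rw [s1, s1] at H1
    rw [s2, s2] at H2
    simp only [Matrix.cons_val_zero, Matrix.cons_val_one, Matrix.head_cons,
      Matrix.cons_val_two, Matrix.tail_cons, Matrix.cons_val_three] at H1 H2
    -- H1 : c * ‖y0 + y1‖ ≤ ‖y2 + -w‖ ∧ ...
    -- H2 : ... ∧ ‖y2 - -w‖ ≤ M * c * ‖y0 - y1‖
    have hA : 2 - ε < ‖y0 + y1‖ := by
      have := sum_lb y0 y1 hy0; linarith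
    have hD : 2 - ε < ‖y2 + w‖ := by
      have := sum_lb y2 w hy2; linarith
    have e1 : y2 + -w = y2 - w := by abel
    have e2 : y2 - -w = y2 + w := by abel
    rw [e1] at H1
    rw [e2] at H2
    have hMε : M * ε < 1 := by
      rw [hεdef, mul_one_div, div_lt_one (by linarith)]
      linarith
    -- from H1.1 : c * (2 - ε) < ε
    have f1 : c * (2 - ε) < ε := by
      have : c * (2 - ε) ≤ c * ‖y0 + y1‖ :=
        mul_le_mul_of_nonneg_left (le_of_lt hA) (le_of_lt hc)
      linarith [H1.1, h2w]
    -- from H2.2 : 2 - ε < M * c * ε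
    have f2 : 2 - ε < M * c * ε := by
      have hMc : 0 < M * c := by positivity
      have : M * c * ‖y0 - y1‖ < M * c * ε := by
        exact mul_lt_mul_of_pos_left h01 hMc
      linarith [H2.2]
    -- contradiction
    have f3 : 2 - ε < c := by nlinarith
    nlinarith [mul_pos (show (0:ℝ) < 2 - ε by linarith) (show (0:ℝ) < c - (2 - ε) by linarith)]
end
end

section
/- In the space X_u with norming set L, the canonical basis is strongly asymptotically ℓ₁ with constant 2: for every n and every family x₁,…,xₙ of normalized, disjointly supported vectors with n ≤ min supp xᵢ for all i, the sequence (x₁,…,xₙ) is 2-equivalent to the canonical basis of ℓ₁ⁿ. -/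
open scoped BigOperators Classical

noncomputable section

/-- in the space `X_u` with norming set `L` (stable under restrictions and
with the Schreier-allowable closure property with factor 1/2), the canonical basis is
strongly asymptotically `ℓ₁` with constant 2. -/
theorem stmt9 {X : Type} [NormedAddCommGroup X] [NormedSpace ℝ X]
    (e : ℕ → X) (L : Set (X →L[ℝ] ℝ))
    (hnorming : ∀ x : X, IsLUB ((fun f : X →L[ℝ] ℝ => f x) '' L) ‖x‖)
    (hstable : ∀ f ∈ L, ∀ A : Set ℕ, ∃ g ∈ L,
      (∀ n ∈ A, g (e n) = f (e n)) ∧ ∀ n : ℕ, n ∉ A → g (e n) = 0)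
    (hallow : ∀ (n : ℕ) (f : Fin n → X →L[ℝ] ℝ), (∀ i, f i ∈ L) →
      (∀ i j : Fin n, i ≠ j → Disjoint (fsupp e (f i)) (fsupp e (f j))) →
      (∀ i, ∀ k ∈ fsupp e (f i), n ≤ k) →
      (2⁻¹ : ℝ) • ∑ i, f i ∈ L)
    (n : ℕ) (c : Fin n → ℕ →₀ ℝ)
    (hnorm1 : ∀ i, ‖vecOf e (c i)‖ = 1)
    (hdisj : ∀ i j : Fin n, i ≠ j → Disjoint (c i).support (c j).support)
    (hmin : ∀ i, ∀ k ∈ (c i).support, n ≤ k) :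
    ∀ a : Fin n → ℝ,
      (1 / 2) * ∑ i, |a i| ≤ ‖∑ i, a i • vecOf e (c i)‖ ∧
      ‖∑ i, a i • vecOf e (c i)‖ ≤ ∑ i, |a i| := by
  intro a
  have hub : ∀ f ∈ L, ∀ x : X, f x ≤ ‖x‖ := fun f hf x => (hnorming x).1 ⟨f, hf, rfl⟩
  have heval : ∀ (h : X →L[ℝ] ℝ) (d : ℕ →₀ ℝ),
      h (vecOf e d) = ∑ k ∈ d.support, d k * h (e k) := by
    intro h d
    unfold vecOf Finsupp.sum
    rw [map_sum]
    simp [smul_eq_mul]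
  constructor
  · -- lower bound
    have hN : (0:ℝ) ≤ ‖∑ i, a i • vecOf e (c i)‖ := norm_nonneg _
    refine le_of_forall_pos_le_add fun δ hδ => ?_
    set T := ∑ i, |a i| with hTdef
    have hT : 0 ≤ T := Finset.sum_nonneg fun i _ => abs_nonneg _
    rcases eq_or_lt_of_le hT with hT0 | hTpos
    · nlinarith
    set η := 2 * δ / T with hηdef
    have hη : 0 < η := by positivity
    set ε : Fin n → ℝ := fun i => if 0 ≤ a i then 1 else -1 with hε
    have hεabs : ∀ i, |ε i| = 1 := by
      intro i; simp only [hε]; split_ifs <;> simp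
    have hεa : ∀ i, a i = ε i * |a i| := by
      intro i; simp only [hε]; split_ifs with h
      · rw [abs_of_nonneg h]; ring
      · rw [abs_of_neg (lt_of_not_ge h)]; ring
    have hchoice : ∀ i : Fin n, ∃ f ∈ L, 1 - η < f (ε i • vecOf e (c i)) := by
      intro i
      have hnorm : ‖ε i • vecOf e (c i)‖ = 1 := by
        rw [norm_smul, Real.norm_eq_abs, hεabs, hnorm1, mul_one]
      have hlub := hnorming (ε i • vecOf e (c i))
      rw [hnorm] at hlub
      obtain ⟨v, hv, hlt, _⟩ := hlub.exists_between (by linarith : (1:ℝ) - η < 1)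
      obtain ⟨f, hfL, rfl⟩ := hv
      exact ⟨f, hfL, hlt⟩
    choose f hfL hflb using hchoice
    have hres : ∀ i : Fin n, ∃ g ∈ L,
        (∀ k ∈ ((c i).support : Set ℕ), g (e k) = f i (e k)) ∧
        ∀ k : ℕ, k ∉ ((c i).support : Set ℕ) → g (e k) = 0 :=
      fun i => hstable (f i) (hfL i) ((c i).support : Set ℕ)
    choose g hgL hgeq hg0 using hres
    -- g i agrees with f i on vecOf e (c i)
    have hgi : ∀ i, g i (vecOf e (c i)) = f i (vecOf e (c i)) := by
      intro i
      rw [heval, heval]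
      exact Finset.sum_congr rfl fun k hk => by rw [hgeq i k hk]
    have hgj : ∀ i j : Fin n, i ≠ j → g i (vecOf e (c j)) = 0 := by
      intro i j hij
      rw [heval]
      refine Finset.sum_eq_zero fun k hk => ?_
      have : k ∉ (c i).support := fun h => Finset.disjoint_left.mp (hdisj i j hij) h hk
      rw [hg0 i k this, mul_zero]
    have hsupp : ∀ i, fsupp e (g i) ⊆ ((c i).support : Set ℕ) := by
      intro i k hk
      by_contra h
      exact hk (hg0 i k h)
    have hFL : (2⁻¹ : ℝ) • ∑ i, g i ∈ L := by
      refine hallow n g hgL (fun i j hij => ?_) (fun i k hk => hmin i k (hsupp i hk))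
      exact (Finset.disjoint_coe.mpr (hdisj i j hij)).mono (hsupp i) (hsupp j)
    have hkey := hub _ hFL (∑ i, a i • vecOf e (c i))
    have hval : ((2⁻¹ : ℝ) • ∑ i, g i) (∑ i, a i • vecOf e (c i))
        = 2⁻¹ * ∑ i, a i * g i (vecOf e (c i)) := by
      rw [ContinuousLinearMap.smul_apply, smul_eq_mul]
      congr 1
      rw [ContinuousLinearMap.sum_apply]
      refine Finset.sum_congr rfl fun j _ => ?_
      rw [map_sum, Finset.sum_eq_single j]
      · rw [map_smul, smul_eq_mul]
      · intro i _ hij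
        rw [map_smul, smul_eq_mul, hgj j i (Ne.symm hij), mul_zero]
      · intro h; exact absurd (Finset.mem_univ j) h
    have hterm : ∀ i, |a i| * (1 - η) ≤ a i * g i (vecOf e (c i)) := by
      intro i
      have h1 : a i * g i (vecOf e (c i)) = |a i| * (f i (ε i • vecOf e (c i))) := by
        rw [map_smul, smul_eq_mul, ← hgi i]
        conv_lhs => rw [hεa i]
        ring
      rw [h1]
      exact mul_le_mul_of_nonneg_left (le_of_lt (hflb i)) (abs_nonneg _)
    have hsum : T * (1 - η) ≤ ∑ i, a i * g i (vecOf e (c i)) := by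
      rw [hTdef, Finset.sum_mul]
      exact Finset.sum_le_sum fun i _ => hterm i
    have hηT : η * T = 2 * δ := by
      rw [hηdef]; field_simp
    have : 2⁻¹ * (T * (1 - η)) ≤ ‖∑ i, a i • vecOf e (c i)‖ := by
      rw [hval] at hkey
      nlinarith
    nlinarith [this]
  · calc ‖∑ i, a i • vecOf e (c i)‖ ≤ ∑ i, ‖a i • vecOf e (c i)‖ := norm_sum_le _ _
      _ = ∑ i, |a i| := by simp [norm_smul, hnorm1, Real.norm_eq_abs]
end
end

section
/- Let X* be the dual of a space X whose norm satisfies: for every M_{2j}-admissible family x₁ < ⋯ < xₙ in X, ‖∑ₖ xₖ‖ ≥ (1/m_{2j}) ∑ₖ ‖xₖ‖. Then for any M_{2j}-admissible sequence of functionals f₁,…,fₙ in X*, one has the upper estimate ‖∑ᵢ fᵢ‖ ≤ m_{2j} · supᵢ ‖fᵢ‖. -/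
open scoped BigOperators Classical

noncomputable section

/-- The minimum of the support of a finitely supported coefficient sequence. -/
def minsupp (c : ℕ →₀ ℝ) : ℕ := sInf (↑c.support : Set ℕ)

private lemma real_le_of_forall_pos_le_add' {a b : ℝ} (h : ∀ ε : ℝ, 0 < ε → a ≤ b + ε) :
    a ≤ b := by
  by_contra hc
  push_neg at hc
  have := h ((a - b) / 2) (by linarith)
  linarith


/-- the dual upper estimate `‖∑ fᵢ‖ ≤ m_{2j} sup ‖fᵢ‖` for
`M_{2j}`-admissible families of functionals, in the dual of a space with the
corresponding lower estimate on `M_{2j}`-admissible families of vectors. -/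
theorem stmt11 {X : Type} [NormedAddCommGroup X] [NormedSpace ℝ X] [CompleteSpace X]
    (e : ℕ → X)
    (hbasis : (Submodule.span ℝ (Set.range e)).topologicalClosure = ⊤)
    (hunc : ∀ (c : ℕ →₀ ℝ) (A : Set ℕ), ‖vecOf e (c.filter (· ∈ A))‖ ≤ ‖vecOf e c‖)
    (Mfam : Set (Finset ℕ)) (m2j : ℝ) (hm : 0 < m2j)
    (hlow : ∀ (k : ℕ) (c : Fin k → ℕ →₀ ℝ),
      (∀ i, (c i).support.Nonempty) → (∀ i j : Fin k, i < j → FsuppLt (c i) (c j)) →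
      (Finset.image (fun i => minsupp (c i)) Finset.univ ∈ Mfam) →
      m2j⁻¹ * ∑ i, ‖vecOf e (c i)‖ ≤ ‖∑ i, vecOf e (c i)‖)
    (n : ℕ) (hn : 0 < n) (g : Fin n → X →L[ℝ] ℝ)
    (hfin : ∀ i, (fsupp e (g i)).Finite)
    (hne : ∀ i, (fsupp e (g i)).Nonempty)
    (hsucc : ∀ i j : Fin n, i < j → ∀ a ∈ fsupp e (g i), ∀ b ∈ fsupp e (g j), a < b)
    (hadm : Finset.image (fun i => sInf (fsupp e (g i))) Finset.univ ∈ Mfam) :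
    ‖∑ i, g i‖ ≤ m2j * ⨆ i, ‖g i‖ := by
  classical
  have hSnn : 0 ≤ ⨆ i, ‖g i‖ := Real.iSup_nonneg fun i => norm_nonneg _
  set S : ℝ := ⨆ i, ‖g i‖ with hSdef
  have hgS : ∀ i, ‖g i‖ ≤ S := by
    intro i
    rw [hSdef]
    exact le_ciSup (f := fun i => ‖g i‖) (Set.Finite.bddAbove (Set.finite_range _)) i
  set μ : Fin n → ℕ := fun i => sInf (fsupp e (g i)) with hμdef
  have hμmem : ∀ i, μ i ∈ fsupp e (g i) := fun i => Nat.sInf_mem (hne i)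
  have hμle : ∀ i, ∀ a ∈ fsupp e (g i), μ i ≤ a := fun i a ha => Nat.sInf_le ha
  have hdisj : ∀ i j : Fin n, i ≠ j → ∀ a, a ∈ fsupp e (g i) → a ∈ fsupp e (g j) → False := by
    intro i j hij a hai haj
    rcases lt_or_gt_of_ne hij with h | h
    · exact lt_irrefl a (hsucc i j h a hai a haj)
    · exact lt_irrefl a (hsucc j i h a haj a hai)
  -- `vecOf e` is additive
  have hv0 : vecOf e 0 = 0 := Finsupp.sum_zero_index
  have hvadd : ∀ a b : ℕ →₀ ℝ, vecOf e (a + b) = vecOf e a + vecOf e b := by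
    intro a b
    exact Finsupp.sum_add_index' (fun i => zero_smul ℝ (e i)) (fun i r s => add_smul r s (e i))
  let V : (ℕ →₀ ℝ) →+ X := { toFun := vecOf e, map_zero' := hv0, map_add' := hvadd }
  have hVsum : ∀ (c : Fin n → ℕ →₀ ℝ), vecOf e (∑ i, c i) = ∑ i, vecOf e (c i) := by
    intro c; exact map_sum V c Finset.univ
  have hvsingle : ∀ (k : ℕ) (r : ℝ), vecOf e (Finsupp.single k r) = r • e k := by
    intro k r
    exact Finsupp.sum_single_index (zero_smul ℝ (e k))
  -- evaluating a functional on a finitely supported vector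
  have hval : ∀ (i : Fin n) (d : ℕ →₀ ℝ),
      g i (vecOf e d) = ∑ m ∈ d.support, d m * g i (e m) := by
    intro i d
    unfold vecOf
    rw [map_finsuppSum]
    simp [Finsupp.sum, smul_eq_mul]
  -- `g i` only sees its support
  have hgfilter : ∀ (i : Fin n) (d : ℕ →₀ ℝ),
      g i (vecOf e (d.filter (· ∈ fsupp e (g i)))) = g i (vecOf e d) := by
    intro i d
    rw [hval, hval, Finsupp.support_filter]
    rw [Finset.sum_congr rfl (fun m hm => by
      rw [Finsupp.filter_apply_pos _ _ (Finset.mem_filter.mp hm).2])]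
    exact Finset.sum_filter_of_ne (fun m _ h0 => right_ne_zero_of_mul h0)
  -- the key estimate on finitely supported vectors
  have key : ∀ c : ℕ →₀ ℝ, |(∑ i, g i) (vecOf e c)| ≤ m2j * S * ‖vecOf e c‖ := by
    intro c
    apply real_le_of_forall_pos_le_add'
    intro ε' hε'
    set B : ℝ := ∑ i, ‖e (μ i)‖ with hBdef
    have hB : 0 ≤ B := Finset.sum_nonneg fun _ _ => norm_nonneg _
    have hD : (0:ℝ) < S * B * (m2j + 1) + 1 := by positivity
    set ε : ℝ := ε' / (S * B * (m2j + 1) + 1) with hεdef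
    have hε : 0 < ε := div_pos hε' hD
    set δ : Fin n → ℝ := fun i => if c (μ i) = 0 then ε else 0 with hδdef
    have hδabs : ∀ i, |δ i| ≤ ε := by
      intro i
      by_cases h : c (μ i) = 0 <;> simp [hδdef, h, abs_of_pos hε, hε.le]
    set dd : Fin n → ℕ →₀ ℝ := fun i => Finsupp.single (μ i) (δ i) with hdddef
    set cε : ℕ →₀ ℝ := c + ∑ i, dd i with hcεdef
    have hμinj : ∀ i j : Fin n, μ i = μ j → i = j := by
      intro i j h
      by_contra hij
      exact hdisj i j hij (μ i) (hμmem i) (h ▸ hμmem j)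
    have hddapply : ∀ (j : Fin n) (m : ℕ), dd j m = if μ j = m then δ j else 0 := by
      intro j m
      simp only [hdddef]
      exact Finsupp.single_apply
    have hddne : ∀ (j : Fin n) (m : ℕ), μ j ≠ m → dd j m = 0 := by
      intro j m h
      rw [hddapply, if_neg h]
    have hcεapply : ∀ m, cε m = c m + ∑ i, dd i m := by
      intro m
      simp [hcεdef, Finsupp.finset_sum_apply]
    have hsum_dd : ∀ i, (∑ j, dd j (μ i)) = δ i := by
      intro i
      rw [Finset.sum_eq_single i]
      · rw [hddapply, if_pos rfl]
      · intro j _ hj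
        exact hddne j (μ i) (fun hc => hj (hμinj j i hc))
      · intro h; exact absurd (Finset.mem_univ i) h
    have hcεμ : ∀ i, cε (μ i) = c (μ i) + δ i := by
      intro i
      rw [hcεapply, hsum_dd]
    have hcεμne : ∀ i, cε (μ i) ≠ 0 := by
      intro i
      rw [hcεμ]
      by_cases h : c (μ i) = 0
      · simp [hδdef, h, hε.ne']
      · simp [hδdef, h]
    set c' : Fin n → ℕ →₀ ℝ := fun i => cε.filter (· ∈ fsupp e (g i)) with hc'def
    have hc'apply_pos : ∀ (i : Fin n) (m : ℕ), m ∈ fsupp e (g i) → c' i m = cε m := by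
      intro i m h
      simp only [hc'def]
      exact Finsupp.filter_apply_pos _ _ h
    have hc'apply_neg : ∀ (i : Fin n) (m : ℕ), m ∉ fsupp e (g i) → c' i m = 0 := by
      intro i m h
      simp only [hc'def]
      exact Finsupp.filter_apply_neg _ _ h
    have hc'supp : ∀ i, ∀ a ∈ (c' i).support, a ∈ fsupp e (g i) := by
      intro i a ha
      by_contra h
      exact (Finsupp.mem_support_iff.mp ha) (hc'apply_neg i a h)
    have hμmem' : ∀ i, μ i ∈ (c' i).support := by
      intro i
      rw [Finsupp.mem_support_iff, hc'apply_pos i (μ i) (hμmem i)]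
      exact hcεμne i
    have hminsupp : ∀ i, minsupp (c' i) = μ i := by
      intro i
      have h1 : minsupp (c' i) ≤ μ i := Nat.sInf_le (by exact_mod_cast hμmem' i)
      have h2 : μ i ≤ minsupp (c' i) := by
        have hmem : minsupp (c' i) ∈ ((c' i).support : Set ℕ) :=
          Nat.sInf_mem ⟨μ i, by exact_mod_cast hμmem' i⟩
        exact hμle i _ (hc'supp i _ (by exact_mod_cast hmem))
      exact le_antisymm h1 h2
    have hlt : ∀ i j : Fin n, i < j → FsuppLt (c' i) (c' j) := by
      intro i j hij a ha b hb
      exact hsucc i j hij a (hc'supp i a ha) b (hc'supp j b hb)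
    have hc'ne : ∀ i, (c' i).support.Nonempty := fun i => ⟨μ i, hμmem' i⟩
    have himg : Finset.image (fun i => minsupp (c' i)) Finset.univ ∈ Mfam := by
      have heq : Finset.image (fun i => minsupp (c' i)) Finset.univ
          = Finset.image (fun i => sInf (fsupp e (g i))) Finset.univ :=
        Finset.image_congr (fun i _ => hminsupp i)
      rw [heq]; exact hadm
    have hlow' := hlow n c' hc'ne hlt himg
    have hsum_le : ∑ i, ‖vecOf e (c' i)‖ ≤ m2j * ‖∑ i, vecOf e (c' i)‖ := by
      have := mul_le_mul_of_nonneg_left hlow' hm.le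
      rw [← mul_assoc, mul_inv_cancel₀ hm.ne', one_mul] at this
      exact this
    -- the sum of the `c' i` is a filtered version of `cε`
    have hsplit : (∑ i, c' i) = cε.filter (· ∈ ⋃ i, fsupp e (g i)) := by
      ext m
      rw [Finsupp.finset_sum_apply]
      by_cases h : ∃ i, m ∈ fsupp e (g i)
      · obtain ⟨i0, hi0⟩ := h
        have hU : m ∈ ⋃ i, fsupp e (g i) := Set.mem_iUnion.mpr ⟨i0, hi0⟩
        rw [Finsupp.filter_apply_pos _ _ hU]
        rw [Finset.sum_eq_single i0]
        · exact hc'apply_pos i0 m hi0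
        · intro j _ hj
          exact hc'apply_neg j m (fun hmj => hdisj j i0 hj m hmj hi0)
        · intro h; exact absurd (Finset.mem_univ i0) h
      · push_neg at h
        have hU : m ∉ ⋃ i, fsupp e (g i) := by
          rw [Set.mem_iUnion]; rintro ⟨i, hi⟩; exact h i hi
        rw [Finsupp.filter_apply_neg _ _ hU]
        exact Finset.sum_eq_zero fun j _ => hc'apply_neg j m (h j)
    have hnormfilter : ‖∑ i, vecOf e (c' i)‖ ≤ ‖vecOf e cε‖ := by
      rw [← hVsum, hsplit]
      exact hunc cε _
    have hddnorm : ∀ i, ‖vecOf e (dd i)‖ ≤ ε * ‖e (μ i)‖ := by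
      intro i
      have h1 : vecOf e (dd i) = δ i • e (μ i) := by
        simp only [hdddef]; exact hvsingle _ _
      rw [h1, norm_smul, Real.norm_eq_abs]
      exact mul_le_mul_of_nonneg_right (hδabs i) (norm_nonneg _)
    have hcεnorm : ‖vecOf e cε‖ ≤ ‖vecOf e c‖ + ε * B := by
      have h1 : vecOf e cε = vecOf e c + ∑ i, vecOf e (dd i) := by
        rw [hcεdef, hvadd, hVsum]
      rw [h1]
      refine (norm_add_le _ _).trans ?_
      have h2 : ‖∑ i, vecOf e (dd i)‖ ≤ ε * B := by
        refine (norm_sum_le _ _).trans ?_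
        rw [hBdef, Finset.mul_sum]
        exact Finset.sum_le_sum fun i _ => hddnorm i
      linarith
    -- relate `c.filter` and `c' i`
    have hfilterc : ∀ i, c' i = c.filter (· ∈ fsupp e (g i)) + dd i := by
      intro i
      ext m
      rw [Finsupp.add_apply]
      by_cases hmi : m ∈ fsupp e (g i)
      · rw [hc'apply_pos i m hmi, Finsupp.filter_apply_pos _ _ hmi, hcεapply]
        congr 1
        rw [Finset.sum_eq_single i]
        · intro j _ hj
          exact hddne j m (fun hc => hdisj j i hj m (hc ▸ hμmem j) hmi)
        · intro h; exact absurd (Finset.mem_univ i) h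
      · rw [hc'apply_neg i m hmi, Finsupp.filter_apply_neg _ _ hmi, zero_add]
        exact (hddne i m (fun hc => hmi (hc ▸ hμmem i))).symm
    have hper : ∀ i, |g i (vecOf e c)| ≤ S * (‖vecOf e (c' i)‖ + ε * ‖e (μ i)‖) := by
      intro i
      rw [← hgfilter i c]
      have h1 : |g i (vecOf e (c.filter (· ∈ fsupp e (g i))))|
          ≤ ‖g i‖ * ‖vecOf e (c.filter (· ∈ fsupp e (g i)))‖ := by
        rw [← Real.norm_eq_abs]; exact (g i).le_opNorm _
      have h2 : ‖vecOf e (c.filter (· ∈ fsupp e (g i)))‖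
          ≤ ‖vecOf e (c' i)‖ + ε * ‖e (μ i)‖ := by
        have h3 : vecOf e (c' i)
            = vecOf e (c.filter (· ∈ fsupp e (g i))) + vecOf e (dd i) := by
          rw [hfilterc i, hvadd]
        have h4 : vecOf e (c.filter (· ∈ fsupp e (g i)))
            = vecOf e (c' i) - vecOf e (dd i) := by
          rw [h3]; abel
        rw [h4]
        refine (norm_sub_le _ _).trans ?_
        have := hddnorm i
        linarith
      calc |g i (vecOf e (c.filter (· ∈ fsupp e (g i))))|
          ≤ ‖g i‖ * ‖vecOf e (c.filter (· ∈ fsupp e (g i)))‖ := h1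
        _ ≤ S * ‖vecOf e (c.filter (· ∈ fsupp e (g i)))‖ :=
            mul_le_mul_of_nonneg_right (hgS i) (norm_nonneg _)
        _ ≤ S * (‖vecOf e (c' i)‖ + ε * ‖e (μ i)‖) :=
            mul_le_mul_of_nonneg_left h2 hSnn
    have hmain : |(∑ i, g i) (vecOf e c)|
        ≤ S * (∑ i, ‖vecOf e (c' i)‖) + S * (ε * B) := by
      rw [ContinuousLinearMap.sum_apply]
      refine (Finset.abs_sum_le_sum_abs _ _).trans ?_
      calc ∑ i, |g i (vecOf e c)|
          ≤ ∑ i, S * (‖vecOf e (c' i)‖ + ε * ‖e (μ i)‖) :=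
            Finset.sum_le_sum fun i _ => hper i
        _ = ∑ i, (S * ‖vecOf e (c' i)‖ + (S * ε) * ‖e (μ i)‖) := by
            refine Finset.sum_congr rfl fun i _ => by ring
        _ = S * (∑ i, ‖vecOf e (c' i)‖) + S * (ε * B) := by
            rw [Finset.sum_add_distrib, ← Finset.mul_sum, ← Finset.mul_sum, hBdef]
            ring
    have hN : ‖∑ i, vecOf e (c' i)‖ ≤ ‖vecOf e c‖ + ε * B :=
      le_trans hnormfilter hcεnorm
    have hfinal : |(∑ i, g i) (vecOf e c)|
        ≤ m2j * S * ‖vecOf e c‖ + ε * (S * B * (m2j + 1)) := by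
      have h1 : ∑ i, ‖vecOf e (c' i)‖ ≤ m2j * (‖vecOf e c‖ + ε * B) :=
        hsum_le.trans (mul_le_mul_of_nonneg_left hN hm.le)
      have h2 := mul_le_mul_of_nonneg_left h1 hSnn
      calc |(∑ i, g i) (vecOf e c)|
          ≤ S * (∑ i, ‖vecOf e (c' i)‖) + S * (ε * B) := hmain
        _ ≤ S * (m2j * (‖vecOf e c‖ + ε * B)) + S * (ε * B) := by linarith
        _ = m2j * S * ‖vecOf e c‖ + ε * (S * B * (m2j + 1)) := by ring
    refine hfinal.trans ?_
    have h5 : ε * (S * B * (m2j + 1)) ≤ ε' := by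
      have h6 : ε * (S * B * (m2j + 1)) ≤ ε * (S * B * (m2j + 1) + 1) :=
        mul_le_mul_of_nonneg_left (by linarith) hε.le
      have h7 : ε * (S * B * (m2j + 1) + 1) = ε' := by
        rw [hεdef, div_mul_cancel₀ _ hD.ne']
      linarith
    linarith
  -- conclude by density
  have hC : 0 ≤ m2j * S := mul_nonneg hm.le hSnn
  refine ContinuousLinearMap.opNorm_le_bound _ hC ?_
  intro x
  have hclosed : IsClosed {y : X | ‖(∑ i, g i) y‖ ≤ m2j * S * ‖y‖} :=
    isClosed_le ((∑ i, g i).continuous.norm) (continuous_const.mul continuous_norm)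
  have hsubset : (Submodule.span ℝ (Set.range e) : Set X)
      ⊆ {y : X | ‖(∑ i, g i) y‖ ≤ m2j * S * ‖y‖} := by
    intro y hy
    obtain ⟨c, hc⟩ := Finsupp.mem_span_range_iff_exists_finsupp.mp hy
    have hcy : vecOf e c = y := hc
    rw [Set.mem_setOf_eq, ← hcy, Real.norm_eq_abs]
    exact key c
  have hx : x ∈ closure (Submodule.span ℝ (Set.range e) : Set X) := by
    rw [← Submodule.topologicalClosure_coe, hbasis]
    trivial
  exact closure_minimal hsubset hclosed hx
end
end
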